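/- arXiv:2311.00676 — 2 statements merged into one kernel-verified Lean document; each statement's English description precedes it below -/
import Mathlib

section
/- Let {z^t} and {w^t} be the sequences produced by SPRM+ with stepsize η ∈ (0, 1/(8L_F)]. Then for every t ≥ 0: (1) DualGap(g(w^{t+1})) ≤ 5·(‖w^t − z^t‖ + ‖w^{t+1} − z^t‖)/η; and (2) DualGap(g(z^t)) ≤ 9·(‖w^t − z^t‖ + ‖w^t − z^{t-1}‖)/η. -/
open scoped BigOperators RealInnerProductSpace
open Filter Topology

noncomputable section

abbrev Vec (d : ℕ) := EuclideanSpace ℝ (Fin d)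
abbrev Joint (d1 d2 : ℕ) := EuclideanSpace ℝ (Fin d1 ⊕ Fin d2)

/-- First block of a joint vector. -/
def xPart {d1 d2 : ℕ} (z : Joint d1 d2) : Vec d1 := WithLp.toLp 2 (fun i => z (Sum.inl i))

/-- Second block of a joint vector. -/
def yPart {d1 d2 : ℕ} (z : Joint d1 d2) : Vec d2 := WithLp.toLp 2 (fun j => z (Sum.inr j))

/-- Assemble a joint vector from its two blocks. -/
def joinPt {d1 d2 : ℕ} (x : Vec d1) (y : Vec d2) : Joint d1 d2 :=
  WithLp.toLp 2 (fun s => Sum.elim (fun i => x i) (fun j => y j) s)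

/-- The probability simplex Δ^d. -/
def simplexSet (d : ℕ) : Set (Vec d) := {x | (∀ i, 0 ≤ x i) ∧ ∑ i, x i = 1}

/-- The clipped positive orthant Δ^d_≥. -/
def clippedSet (d : ℕ) : Set (Vec d) := {u | (∀ i, 0 ≤ u i) ∧ 1 ≤ ∑ i, u i}

/-- Z = Δ^{d1} × Δ^{d2}, as a subset of the joint Euclidean space. -/
def Zset (d1 d2 : ℕ) : Set (Joint d1 d2) :=
  {z | xPart z ∈ simplexSet d1 ∧ yPart z ∈ simplexSet d2}

/-- Z_≥ = Δ^{d1}_≥ × Δ^{d2}_≥. -/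
def ZgeSet (d1 d2 : ℕ) : Set (Joint d1 d2) :=
  {z | xPart z ∈ clippedSet d1 ∧ yPart z ∈ clippedSet d2}

/-- Bilinear payoff xᵀ A y. -/
def payoff {d1 d2 : ℕ} (A : Matrix (Fin d1) (Fin d2) ℝ) (x : Vec d1) (y : Vec d2) : ℝ :=
  ∑ i, ∑ j, x i * A i j * y j

/-- Duality gap of a pair of strategies. -/
def dualGap {d1 d2 : ℕ} (A : Matrix (Fin d1) (Fin d2) ℝ) (x : Vec d1) (y : Vec d2) : ℝ :=
  sSup ((fun y' => payoff A x y') '' simplexSet d2) -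
    sInf ((fun x' => payoff A x' y) '' simplexSet d1)

/-- Nash equilibrium: a feasible pair with zero duality gap. -/
def IsNash {d1 d2 : ℕ} (A : Matrix (Fin d1) (Fin d2) ℝ) (x : Vec d1) (y : Vec d2) : Prop :=
  x ∈ simplexSet d1 ∧ y ∈ simplexSet d2 ∧ dualGap A x y = 0

/-- Strict Nash equilibrium: unique best responses on both sides. -/
def IsStrictNash {d1 d2 : ℕ} (A : Matrix (Fin d1) (Fin d2) ℝ)
    (xs : Vec d1) (ys : Vec d2) : Prop :=
  IsNash A xs ys ∧
  (∀ x ∈ simplexSet d1, x ≠ xs → payoff A xs ys < payoff A x ys) ∧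
  (∀ y ∈ simplexSet d2, y ≠ ys → payoff A xs y < payoff A xs ys)

/-- ℓ₁ normalization of a block. -/
def normPart {d : ℕ} (u : Vec d) : Vec d := (∑ i, |u i|)⁻¹ • u

/-- ℓ₁ normalization with the convention 0/0 = (1/d)·1. -/
def normPart0 {d : ℕ} (u : Vec d) : Vec d :=
  if (∑ i, |u i|) = 0 then WithLp.toLp 2 (fun _ => (d : ℝ)⁻¹) else (∑ i, |u i|)⁻¹ • u

/-- The normalization operator g. -/
def gNorm {d1 d2 : ℕ} (z : Joint d1 d2) : Joint d1 d2 :=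
  joinPt (normPart (xPart z)) (normPart (yPart z))

/-- The regret operator F. -/
def Fop {d1 d2 : ℕ} (A : Matrix (Fin d1) (Fin d2) ℝ) (z : Joint d1 d2) : Joint d1 d2 :=
  joinPt
    (WithLp.toLp 2 (fun i => (∑ j, A i j * normPart (yPart z) j) -
      payoff A (normPart (xPart z)) (normPart (yPart z))))
    (WithLp.toLp 2 (fun j => -(∑ i, A i j * normPart (xPart z) i) +
      payoff A (normPart (xPart z)) (normPart (yPart z))))

/-- Spectral (ℓ₂ operator) norm of a matrix. -/
def opNorm {d1 d2 : ℕ} (A : Matrix (Fin d1) (Fin d2) ℝ) : ℝ :=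
  ‖LinearMap.toContinuousLinearMap (Matrix.toEuclideanLin A)‖

/-- Lipschitz constant L_F = √6 ‖A‖_op max{d1,d2}. -/
def LF {d1 d2 : ℕ} (A : Matrix (Fin d1) (Fin d2) ℝ) : ℝ :=
  Real.sqrt 6 * opNorm A * max (d1 : ℝ) (d2 : ℝ)

open Classical in
/-- Euclidean (metric) projection onto a set: the distance minimizer, when it exists. -/
def projOn {E : Type*} [NormedAddCommGroup E] [InnerProductSpace ℝ E]
    (S : Set E) (u : E) : E :=
  if h : ∃ p ∈ S, ∀ q ∈ S, ‖u - p‖ ≤ ‖u - q‖ then h.choose else u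

/-- The set of Nash equilibria, in the joint space. -/
def nashSet {d1 d2 : ℕ} (A : Matrix (Fin d1) (Fin d2) ℝ) : Set (Joint d1 d2) :=
  {z | IsNash A (xPart z) (yPart z)}

/-- SOL(Z_≥, F): solutions of the variational inequality. -/
def SolSet {d1 d2 : ℕ} (A : Matrix (Fin d1) (Fin d2) ℝ) : Set (Joint d1 d2) :=
  {z | z ∈ ZgeSet d1 d2 ∧ ∀ z' ∈ ZgeSet d1 d2, ⟪Fop A z, z - z'⟫ ≤ 0}

/-- p is a limit point of the sequence z: limit of a convergent subsequence. -/
def IsLimitPoint {E : Type*} [TopologicalSpace E] (z : ℕ → E) (p : E) : Prop :=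
  ∃ φ : ℕ → ℕ, StrictMono φ ∧ Tendsto (z ∘ φ) atTop (𝓝 p)

/-- The ExRM⁺ dynamics: z are the main iterates, zh the half-iterates. -/
def ExRM {d1 d2 : ℕ} (A : Matrix (Fin d1) (Fin d2) ℝ) (η : ℝ)
    (z zh : ℕ → Joint d1 d2) : Prop :=
  z 0 ∈ Zset d1 d2 ∧
  (∀ t, zh t = projOn (ZgeSet d1 d2) (z t - η • Fop A (z t))) ∧
  (∀ t, z (t + 1) = projOn (ZgeSet d1 d2) (z t - η • Fop A (zh t)))

/-- The SPRM⁺ dynamics (z^{-1} = w^0). -/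
def SPRM {d1 d2 : ℕ} (A : Matrix (Fin d1) (Fin d2) ℝ) (η : ℝ)
    (w z : ℕ → Joint d1 d2) : Prop :=
  w 0 ∈ Zset d1 d2 ∧
  z 0 = projOn (ZgeSet d1 d2) (w 0 - η • Fop A (w 0)) ∧
  (∀ t, z (t + 1) = projOn (ZgeSet d1 d2) (w (t + 1) - η • Fop A (z t))) ∧
  (∀ t, w (t + 1) = projOn (ZgeSet d1 d2) (w t - η • Fop A (z t)))

/-- z^{t-1} with the convention z^{-1} = w^0. -/
def zPrev {d1 d2 : ℕ} (w z : ℕ → Joint d1 d2) : ℕ → Joint d1 d2 :=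
  fun t => if t = 0 then w 0 else z (t - 1)



namespace SPRMAux

open Finset

variable {d d1 d2 : ℕ}

/-! ### Block manipulation -/

lemma xPart_joinPt (x : Vec d1) (y : Vec d2) : xPart (joinPt x y) = x := rfl
lemma yPart_joinPt (x : Vec d1) (y : Vec d2) : yPart (joinPt x y) = y := rfl

lemma joinPt_parts (z : Joint d1 d2) : joinPt (xPart z) (yPart z) = z := by
  ext s; cases s <;> rfl

lemma xPart_sub (a b : Joint d1 d2) : xPart (a - b) = xPart a - xPart b := rfl
lemma yPart_sub (a b : Joint d1 d2) : yPart (a - b) = yPart a - yPart b := rfl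

lemma inner_split (z z' : Joint d1 d2) :
    ⟪z, z'⟫ = ⟪xPart z, xPart z'⟫ + ⟪yPart z, yPart z'⟫ := by
  simp only [PiLp.inner_apply, RCLike.inner_apply, starRingEnd_apply, star_trivial]
  rw [Fintype.sum_sum_type]; rfl

lemma norm_split_sq (z : Joint d1 d2) : ‖z‖ ^ 2 = ‖xPart z‖ ^ 2 + ‖yPart z‖ ^ 2 := by
  rw [← real_inner_self_eq_norm_sq, ← real_inner_self_eq_norm_sq, ← real_inner_self_eq_norm_sq]
  exact inner_split z z

lemma norm_xPart_le (z : Joint d1 d2) : ‖xPart z‖ ≤ ‖z‖ := by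
  have h := norm_split_sq z
  nlinarith [norm_nonneg (xPart z), norm_nonneg (yPart z), norm_nonneg z, sq_nonneg (‖yPart z‖)]

lemma norm_yPart_le (z : Joint d1 d2) : ‖yPart z‖ ≤ ‖z‖ := by
  have h := norm_split_sq z
  nlinarith [norm_nonneg (xPart z), norm_nonneg (yPart z), norm_nonneg z]

lemma norm_join_le (x : Vec d1) (y : Vec d2) : ‖joinPt x y‖ ≤ ‖x‖ + ‖y‖ := by
  have h := norm_split_sq (joinPt x y)
  rw [xPart_joinPt, yPart_joinPt] at h
  nlinarith [norm_nonneg x, norm_nonneg y, norm_nonneg (joinPt x y), mul_nonneg (norm_nonneg x) (norm_nonneg y)]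

/-! ### Simplex and clipped set basics -/

lemma norm_le_sum_of_nonneg {u : Vec d} (h : ∀ i, 0 ≤ u i) : ‖u‖ ≤ ∑ i, u i := by
  rw [EuclideanSpace.norm_eq]
  have h1 : ∑ i, ‖u i‖ ^ 2 ≤ (∑ i, u i) ^ 2 := by
    have := Finset.sum_sq_le_sq_sum_of_nonneg (s := Finset.univ) (f := fun i => u i)
      (fun i _ => h i)
    simpa [Real.norm_eq_abs, abs_of_nonneg, fun i => abs_of_nonneg (h i)] using this
  calc Real.sqrt (∑ i, ‖u i‖ ^ 2) ≤ Real.sqrt ((∑ i, u i) ^ 2) := Real.sqrt_le_sqrt h1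
    _ = ∑ i, u i := Real.sqrt_sq (Finset.sum_nonneg fun i _ => h i)

lemma simplex_norm_le_one {x : Vec d} (hx : x ∈ simplexSet d) : ‖x‖ ≤ 1 := by
  obtain ⟨h0, h1⟩ := hx
  simpa [h1] using norm_le_sum_of_nonneg h0

lemma simplex_diam {x x' : Vec d} (hx : x ∈ simplexSet d) (hx' : x' ∈ simplexSet d) :
    ‖x - x'‖ ^ 2 ≤ 2 := by
  obtain ⟨h0, h1⟩ := hx; obtain ⟨h0', h1'⟩ := hx'
  have hnorm : ‖x - x'‖ ^ 2 = ∑ i, (x i - x' i) ^ 2 := by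
    rw [← real_inner_self_eq_norm_sq]
    simp only [PiLp.inner_apply, RCLike.inner_apply, starRingEnd_apply, star_trivial]
    refine Finset.sum_congr rfl fun i _ => ?_
    have : (x - x') i = x i - x' i := rfl
    rw [this]; ring
  rw [hnorm]
  have hle : ∀ i ∈ Finset.univ, (x i - x' i) ^ 2 ≤ x i + x' i := by
    intro i _
    have hx1 : x i ≤ 1 := by
      rw [← h1]; exact Finset.single_le_sum (fun j _ => h0 j) (Finset.mem_univ i)
    have hx1' : x' i ≤ 1 := by
      rw [← h1']; exact Finset.single_le_sum (fun j _ => h0' j) (Finset.mem_univ i)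
    have habs : |x i - x' i| ≤ 1 := abs_le.2 ⟨by linarith [h0 i, hx1'], by linarith [h0' i, hx1]⟩
    have habs2 : |x i - x' i| ≤ x i + x' i := abs_le.2 ⟨by linarith [h0 i, h0' i], by linarith [h0 i, h0' i]⟩
    calc (x i - x' i) ^ 2 = |x i - x' i| * |x i - x' i| := by rw [abs_mul_abs_self]; ring
      _ ≤ 1 * (x i + x' i) := by
          apply mul_le_mul habs habs2 (abs_nonneg _) one_pos.le
      _ = x i + x' i := one_mul _
  calc ∑ i, (x i - x' i) ^ 2 ≤ ∑ i, (x i + x' i) := Finset.sum_le_sum hle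
    _ = 2 := by rw [Finset.sum_add_distrib, h1, h1']; norm_num

lemma Zset_norm_sub_le {a b : Joint d1 d2} (ha : a ∈ Zset d1 d2) (hb : b ∈ Zset d1 d2) :
    ‖a - b‖ ≤ 2 := by
  have h := norm_split_sq (a - b)
  rw [xPart_sub, yPart_sub] at h
  have h1 := simplex_diam ha.1 hb.1
  have h2 := simplex_diam ha.2 hb.2
  have : ‖a - b‖ ^ 2 ≤ 4 := by rw [h]; linarith
  nlinarith [norm_nonneg (a - b)]

lemma clipped_sum_abs {u : Vec d} (hu : u ∈ clippedSet d) : ∑ i, |u i| = ∑ i, u i :=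
  Finset.sum_congr rfl fun i _ => abs_of_nonneg (hu.1 i)

lemma clipped_sum_pos {u : Vec d} (hu : u ∈ clippedSet d) : 0 < ∑ i, u i :=
  lt_of_lt_of_le one_pos hu.2

lemma normPart_apply {u : Vec d} (i : Fin d) : normPart u i = (∑ j, |u j|)⁻¹ * u i := rfl

lemma normPart_mem {u : Vec d} (hu : u ∈ clippedSet d) : normPart u ∈ simplexSet d := by
  have habs := clipped_sum_abs hu
  have hs := clipped_sum_pos hu
  constructor
  · intro i
    rw [normPart_apply, habs]
    exact mul_nonneg (inv_nonneg.2 hs.le) (hu.1 i)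
  · have : ∑ i, normPart u i = (∑ j, |u j|)⁻¹ * ∑ i, u i := by
      rw [Finset.mul_sum]; exact Finset.sum_congr rfl fun i _ => rfl
    rw [this, habs]
    field_simp

lemma smul_normPart {u : Vec d} (hu : u ∈ clippedSet d) : (∑ i, u i) • normPart u = u := by
  have habs := clipped_sum_abs hu
  have hs := clipped_sum_pos hu
  ext i
  show (∑ j, u j) * normPart u i = u i
  rw [normPart_apply, habs]
  field_simp

lemma simplex_mem_clipped {x : Vec d} (hx : x ∈ simplexSet d) : x ∈ clippedSet d :=
  ⟨hx.1, le_of_eq hx.2.symm⟩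

lemma Zset_subset_Zge {z : Joint d1 d2} (hz : z ∈ Zset d1 d2) : z ∈ ZgeSet d1 d2 :=
  ⟨simplex_mem_clipped hz.1, simplex_mem_clipped hz.2⟩

end SPRMAux
namespace SPRMAux

open Finset

variable {d d1 d2 : ℕ}

/-! ### Matrix operator bounds -/

/-- A·y as a Euclidean vector. -/
def mvY (A : Matrix (Fin d1) (Fin d2) ℝ) (y : Vec d2) : Vec d1 := WithLp.toLp 2 (fun i => ∑ j, A i j * y j)

/-- Aᵀ·x as a Euclidean vector. -/
def tvX (A : Matrix (Fin d1) (Fin d2) ℝ) (x : Vec d1) : Vec d2 := WithLp.toLp 2 (fun j => ∑ i, A i j * x i)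

/-- All-ones vector. -/
def onesV (d : ℕ) : Vec d := WithLp.toLp 2 (fun _ => 1)

lemma mvY_eq (A : Matrix (Fin d1) (Fin d2) ℝ) (y : Vec d2) :
    mvY A y = Matrix.toEuclideanLin A y := by
  ext i
  simp [mvY, Matrix.toEuclideanLin_apply, Matrix.mulVec, dotProduct]

lemma norm_mvY_le (A : Matrix (Fin d1) (Fin d2) ℝ) (y : Vec d2) :
    ‖mvY A y‖ ≤ opNorm A * ‖y‖ := by
  rw [mvY_eq]
  have : Matrix.toEuclideanLin A y = (LinearMap.toContinuousLinearMap (Matrix.toEuclideanLin A)) y := rfl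
  rw [this]
  exact (LinearMap.toContinuousLinearMap (Matrix.toEuclideanLin A)).le_opNorm y

lemma inner_tvX (A : Matrix (Fin d1) (Fin d2) ℝ) (x : Vec d1) (y : Vec d2) :
    ⟪y, tvX A x⟫ = ⟪x, mvY A y⟫ := by
  simp only [PiLp.inner_apply, RCLike.inner_apply, starRingEnd_apply, star_trivial,
    tvX, mvY, PiLp.toLp_apply]
  simp_rw [Finset.sum_mul]
  rw [Finset.sum_comm]
  apply Finset.sum_congr rfl; intro i _
  apply Finset.sum_congr rfl; intro j _
  ring

lemma norm_tvX_le (A : Matrix (Fin d1) (Fin d2) ℝ) (x : Vec d1) :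
    ‖tvX A x‖ ≤ opNorm A * ‖x‖ := by
  rcases eq_or_lt_of_le (norm_nonneg (tvX A x)) with h | h
  · rw [← h]; exact mul_nonneg (norm_nonneg _) (norm_nonneg _)
  · have key : ‖tvX A x‖ ^ 2 = ⟪x, mvY A (tvX A x)⟫ := by
      rw [← inner_tvX, real_inner_self_eq_norm_sq]
    have h2 : ⟪x, mvY A (tvX A x)⟫ ≤ ‖x‖ * (opNorm A * ‖tvX A x‖) :=
      le_trans (real_inner_le_norm _ _)
        (by nlinarith [norm_mvY_le A (tvX A x), norm_nonneg x])
    have := key ▸ h2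
    nlinarith [norm_nonneg x]

lemma payoff_eq_inner_mv (A : Matrix (Fin d1) (Fin d2) ℝ) (x : Vec d1) (y : Vec d2) :
    payoff A x y = ⟪x, mvY A y⟫ := by
  simp only [payoff, PiLp.inner_apply, RCLike.inner_apply, starRingEnd_apply, star_trivial, mvY, PiLp.toLp_apply]
  apply Finset.sum_congr rfl; intro i _
  rw [Finset.sum_mul]
  apply Finset.sum_congr rfl; intro j _
  ring

lemma payoff_eq_inner_tv (A : Matrix (Fin d1) (Fin d2) ℝ) (x : Vec d1) (y : Vec d2) :
    payoff A x y = ⟪y, tvX A x⟫ := by rw [inner_tvX, payoff_eq_inner_mv]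

lemma abs_payoff_le (A : Matrix (Fin d1) (Fin d2) ℝ) (x : Vec d1) (y : Vec d2) :
    |payoff A x y| ≤ opNorm A * ‖x‖ * ‖y‖ := by
  rw [payoff_eq_inner_mv]
  calc |⟪x, mvY A y⟫| ≤ ‖x‖ * ‖mvY A y‖ := abs_real_inner_le_norm _ _
    _ ≤ ‖x‖ * (opNorm A * ‖y‖) := by
        have := norm_mvY_le A y
        nlinarith [norm_nonneg x]
    _ = opNorm A * ‖x‖ * ‖y‖ := by ring

lemma payoff_sub_le (A : Matrix (Fin d1) (Fin d2) ℝ) {x x' : Vec d1} {y y' : Vec d2}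
    (hx : ‖x‖ ≤ 1) (hy' : ‖y'‖ ≤ 1) :
    |payoff A x y - payoff A x' y'| ≤ opNorm A * (‖x - x'‖ + ‖y - y'‖) := by
  have h1 : payoff A x y - payoff A x' y' = payoff A x (y - y') + payoff A (x - x') y' := by
    simp only [payoff]
    rw [← Finset.sum_sub_distrib, ← Finset.sum_add_distrib]
    apply Finset.sum_congr rfl; intro i _
    rw [← Finset.sum_sub_distrib, ← Finset.sum_add_distrib]
    apply Finset.sum_congr rfl; intro j _
    have hxx : (x - x') i = x i - x' i := rfl
    have hyy : (y - y') j = y j - y' j := rfl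
    rw [hxx, hyy]; ring
  rw [h1]
  have h2 := abs_payoff_le A x (y - y')
  have h3 := abs_payoff_le A (x - x') y'
  have hop : 0 ≤ opNorm A := norm_nonneg _
  calc |payoff A x (y - y') + payoff A (x - x') y'|
      ≤ |payoff A x (y - y')| + |payoff A (x - x') y'| := abs_add_le _ _
    _ ≤ opNorm A * ‖x‖ * ‖y - y'‖ + opNorm A * ‖x - x'‖ * ‖y'‖ := add_le_add h2 h3
    _ ≤ opNorm A * (‖x - x'‖ + ‖y - y'‖) := by
        have e1 : opNorm A * ‖x‖ * ‖y - y'‖ ≤ opNorm A * 1 * ‖y - y'‖ :=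
          mul_le_mul_of_nonneg_right (mul_le_mul_of_nonneg_left hx hop) (norm_nonneg _)
        have e2 : opNorm A * ‖x - x'‖ * ‖y'‖ ≤ opNorm A * ‖x - x'‖ * 1 :=
          mul_le_mul_of_nonneg_left hy' (mul_nonneg hop (norm_nonneg _))
        nlinarith

lemma norm_onesV (d : ℕ) : ‖onesV d‖ = Real.sqrt d := by
  rw [EuclideanSpace.norm_eq]
  simp [onesV]

end SPRMAux
namespace SPRMAux

open Finset

variable {d d1 d2 : ℕ}

lemma le_of_sq_le' {a b : ℝ} (ha : 0 ≤ a) (hb : 0 ≤ b) (h : a ^ 2 ≤ b ^ 2) : a ≤ b := by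
  nlinarith

lemma sum_eq_inner_ones (w : Vec d) : ∑ i, w i = ⟪onesV d, w⟫ := by
  simp [PiLp.inner_apply, RCLike.inner_apply, onesV]

lemma abs_sum_sub_le (u v : Vec d) : |(∑ i, u i) - ∑ i, v i| ≤ Real.sqrt d * ‖u - v‖ := by
  have h : (∑ i, u i) - ∑ i, v i = ⟪onesV d, u - v⟫ := by
    rw [inner_sub_right, ← sum_eq_inner_ones, ← sum_eq_inner_ones]
  rw [h]
  calc |⟪onesV d, u - v⟫| ≤ ‖onesV d‖ * ‖u - v‖ := abs_real_inner_le_norm _ _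
    _ = Real.sqrt d * ‖u - v‖ := by rw [norm_onesV]

lemma normPart_lip {u v : Vec d} (hu : u ∈ clippedSet d) (hv : v ∈ clippedSet d) :
    ‖normPart u - normPart v‖ ≤ (1 + Real.sqrt d) * ‖u - v‖ := by
  set s := ∑ i, u i with hs
  set t := ∑ i, v i with ht
  have hs1 : (1:ℝ) ≤ s := hu.2
  have ht1 : (1:ℝ) ≤ t := hv.2
  have hs0 : (0:ℝ) < s := lt_of_lt_of_le one_pos hs1
  have ht0 : (0:ℝ) < t := lt_of_lt_of_le one_pos ht1
  have hnu : normPart u = s⁻¹ • u := by rw [normPart, clipped_sum_abs hu]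
  have hnv : normPart v = t⁻¹ • v := by rw [normPart, clipped_sum_abs hv]
  have hdecomp : normPart u - normPart v = t⁻¹ • (u - v) + (s⁻¹ - t⁻¹) • u := by
    rw [hnu, hnv, smul_sub, sub_smul]; abel
  rw [hdecomp]
  have h1 : ‖t⁻¹ • (u - v)‖ ≤ ‖u - v‖ := by
    rw [norm_smul, Real.norm_eq_abs, abs_of_pos (inv_pos.2 ht0)]
    calc t⁻¹ * ‖u - v‖ ≤ 1 * ‖u - v‖ := by
          apply mul_le_mul_of_nonneg_right _ (norm_nonneg _)
          rw [inv_le_one_iff₀]; right; exact ht1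
      _ = ‖u - v‖ := one_mul _
  have h2 : ‖(s⁻¹ - t⁻¹) • u‖ ≤ Real.sqrt d * ‖u - v‖ := by
    rw [norm_smul, Real.norm_eq_abs]
    have hst : s⁻¹ - t⁻¹ = (t - s) / (s * t) := by field_simp
    have hnu' : ‖u‖ ≤ s := norm_le_sum_of_nonneg hu.1
    have habs : |s⁻¹ - t⁻¹| * ‖u‖ ≤ |t - s| := by
      rw [hst, abs_div, abs_of_pos (mul_pos hs0 ht0), div_mul_eq_mul_div,
        div_le_iff₀ (mul_pos hs0 ht0)]
      have hle : ‖u‖ ≤ s * t := le_trans hnu' (le_mul_of_one_le_right hs0.le ht1)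
      exact mul_le_mul_of_nonneg_left hle (abs_nonneg _)
    calc |s⁻¹ - t⁻¹| * ‖u‖ ≤ |t - s| := habs
      _ = |(∑ i, v i) - ∑ i, u i| := by rw [ht, hs]
      _ ≤ Real.sqrt d * ‖v - u‖ := abs_sum_sub_le v u
      _ = Real.sqrt d * ‖u - v‖ := by rw [norm_sub_rev]
  calc ‖t⁻¹ • (u - v) + (s⁻¹ - t⁻¹) • u‖ ≤ ‖t⁻¹ • (u - v)‖ + ‖(s⁻¹ - t⁻¹) • u‖ := norm_add_le _ _
    _ ≤ ‖u - v‖ + Real.sqrt d * ‖u - v‖ := add_le_add h1 h2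
    _ = (1 + Real.sqrt d) * ‖u - v‖ := by ring

end SPRMAux
namespace SPRMAux

open Finset

variable {d d1 d2 : ℕ}

lemma payoff_smul_left (A : Matrix (Fin d1) (Fin d2) ℝ) (c : ℝ) (x : Vec d1) (y : Vec d2) :
    payoff A (c • x) y = c * payoff A x y := by
  simp only [payoff, Finset.mul_sum]
  apply Finset.sum_congr rfl; intro i _
  apply Finset.sum_congr rfl; intro j _
  have : (c • x) i = c * x i := rfl
  rw [this]; ring

lemma payoff_smul_right (A : Matrix (Fin d1) (Fin d2) ℝ) (c : ℝ) (x : Vec d1) (y : Vec d2) :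
    payoff A x (c • y) = c * payoff A x y := by
  simp only [payoff, Finset.mul_sum]
  apply Finset.sum_congr rfl; intro i _
  apply Finset.sum_congr rfl; intro j _
  have : (c • y) j = c * y j := rfl
  rw [this]; ring

lemma xPart_Fop (A : Matrix (Fin d1) (Fin d2) ℝ) (z : Joint d1 d2) :
    xPart (Fop A z) = mvY A (normPart (yPart z)) -
      payoff A (normPart (xPart z)) (normPart (yPart z)) • onesV d1 := by
  ext i
  show (∑ j, A i j * normPart (yPart z) j) -
      payoff A (normPart (xPart z)) (normPart (yPart z)) =
    (mvY A (normPart (yPart z)) -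
      payoff A (normPart (xPart z)) (normPart (yPart z)) • onesV d1) i
  have : (mvY A (normPart (yPart z)) -
      payoff A (normPart (xPart z)) (normPart (yPart z)) • onesV d1) i =
      mvY A (normPart (yPart z)) i -
      payoff A (normPart (xPart z)) (normPart (yPart z)) * onesV d1 i := rfl
  rw [this]
  simp [mvY, onesV]

lemma yPart_Fop (A : Matrix (Fin d1) (Fin d2) ℝ) (z : Joint d1 d2) :
    yPart (Fop A z) = payoff A (normPart (xPart z)) (normPart (yPart z)) • onesV d2 -
      tvX A (normPart (xPart z)) := by
  ext j
  show -(∑ i, A i j * normPart (xPart z) i) +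
      payoff A (normPart (xPart z)) (normPart (yPart z)) =
    (payoff A (normPart (xPart z)) (normPart (yPart z)) • onesV d2 -
      tvX A (normPart (xPart z))) j
  have : (payoff A (normPart (xPart z)) (normPart (yPart z)) • onesV d2 -
      tvX A (normPart (xPart z))) j =
      payoff A (normPart (xPart z)) (normPart (yPart z)) * onesV d2 j -
      tvX A (normPart (xPart z)) j := rfl
  rw [this]
  simp [tvX, onesV]; ring

lemma inner_vec_sum (a b : Vec d) : ⟪a, b⟫ = ∑ i, a i * b i := by
  simp [PiLp.inner_apply, RCLike.inner_apply, mul_comm]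

lemma inner_Fop (A : Matrix (Fin d1) (Fin d2) ℝ) (z z' : Joint d1 d2) :
    ⟪Fop A z, z'⟫ =
      payoff A (xPart z') (normPart (yPart z)) -
        payoff A (normPart (xPart z)) (yPart z') +
        payoff A (normPart (xPart z)) (normPart (yPart z)) *
          ((∑ j, yPart z' j) - ∑ i, xPart z' i) := by
  set nx := normPart (xPart z)
  set ny := normPart (yPart z)
  set v := payoff A nx ny with hv
  rw [inner_split, xPart_Fop, yPart_Fop]
  rw [inner_sub_left, inner_sub_left, real_inner_smul_left, real_inner_smul_left]
  rw [← sum_eq_inner_ones, ← sum_eq_inner_ones]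
  have h1 : ⟪mvY A ny, xPart z'⟫ = payoff A (xPart z') ny := by
    rw [payoff_eq_inner_mv, real_inner_comm]
  have h2 : ⟪tvX A nx, yPart z'⟫ = payoff A nx (yPart z') := by
    rw [payoff_eq_inner_tv, real_inner_comm]
  rw [h1, h2, ← hv]
  ring

lemma inner_Fop_self (A : Matrix (Fin d1) (Fin d2) ℝ) {z : Joint d1 d2}
    (hz : z ∈ ZgeSet d1 d2) : ⟪Fop A z, z⟫ = 0 := by
  rw [inner_Fop]
  have hx : payoff A (xPart z) (normPart (yPart z)) =
      (∑ i, xPart z i) * payoff A (normPart (xPart z)) (normPart (yPart z)) := by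
    conv_lhs => rw [← smul_normPart hz.1]
    rw [payoff_smul_left]
  have hy : payoff A (normPart (xPart z)) (yPart z) =
      (∑ j, yPart z j) * payoff A (normPart (xPart z)) (normPart (yPart z)) := by
    conv_lhs => rw [← smul_normPart hz.2]
    rw [payoff_smul_right]
  rw [hx, hy]
  ring

lemma inner_Fop_sub_Zset (A : Matrix (Fin d1) (Fin d2) ℝ) {z zh : Joint d1 d2}
    (hz : z ∈ ZgeSet d1 d2) (hzh : zh ∈ Zset d1 d2) :
    ⟪Fop A z, z - zh⟫ =
      payoff A (normPart (xPart z)) (yPart zh) -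
        payoff A (xPart zh) (normPart (yPart z)) := by
  rw [inner_sub_right, inner_Fop_self A hz, inner_Fop, hzh.1.2, hzh.2.2]
  ring

lemma norm_Fop_le (A : Matrix (Fin d1) (Fin d2) ℝ) {z : Joint d1 d2}
    (hz : z ∈ ZgeSet d1 d2) :
    ‖Fop A z‖ ≤ opNorm A * (2 + Real.sqrt d1 + Real.sqrt d2) := by
  set nx := normPart (xPart z)
  set ny := normPart (yPart z)
  have hnx : ‖nx‖ ≤ 1 := simplex_norm_le_one (normPart_mem hz.1)
  have hny : ‖ny‖ ≤ 1 := simplex_norm_le_one (normPart_mem hz.2)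
  have hop : (0:ℝ) ≤ opNorm A := norm_nonneg _
  have hv : |payoff A nx ny| ≤ opNorm A := by
    calc |payoff A nx ny| ≤ opNorm A * ‖nx‖ * ‖ny‖ := abs_payoff_le A nx ny
      _ ≤ opNorm A * 1 * 1 := by
          apply mul_le_mul (mul_le_mul_of_nonneg_left hnx hop) hny (norm_nonneg _)
          positivity
      _ = opNorm A := by ring
  have hFx : ‖xPart (Fop A z)‖ ≤ opNorm A * (1 + Real.sqrt d1) := by
    rw [xPart_Fop]
    calc ‖mvY A ny - payoff A nx ny • onesV d1‖
        ≤ ‖mvY A ny‖ + ‖payoff A nx ny • onesV d1‖ := norm_sub_le _ _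
      _ ≤ opNorm A * ‖ny‖ + |payoff A nx ny| * Real.sqrt d1 := by
          rw [norm_smul, Real.norm_eq_abs, norm_onesV]
          exact add_le_add (norm_mvY_le A ny) le_rfl
      _ ≤ opNorm A * 1 + opNorm A * Real.sqrt d1 := by
          apply add_le_add (mul_le_mul_of_nonneg_left hny hop)
          exact mul_le_mul_of_nonneg_right hv (Real.sqrt_nonneg _)
      _ = opNorm A * (1 + Real.sqrt d1) := by ring
  have hFy : ‖yPart (Fop A z)‖ ≤ opNorm A * (1 + Real.sqrt d2) := by
    rw [yPart_Fop]
    calc ‖payoff A nx ny • onesV d2 - tvX A nx‖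
        ≤ ‖payoff A nx ny • onesV d2‖ + ‖tvX A nx‖ := norm_sub_le _ _
      _ ≤ |payoff A nx ny| * Real.sqrt d2 + opNorm A * ‖nx‖ := by
          rw [norm_smul, Real.norm_eq_abs, norm_onesV]
          exact add_le_add le_rfl (norm_tvX_le A nx)
      _ ≤ opNorm A * Real.sqrt d2 + opNorm A * 1 := by
          apply add_le_add (mul_le_mul_of_nonneg_right hv (Real.sqrt_nonneg _))
          exact mul_le_mul_of_nonneg_left hnx hop
      _ = opNorm A * (1 + Real.sqrt d2) := by ring
  calc ‖Fop A z‖ = ‖joinPt (xPart (Fop A z)) (yPart (Fop A z))‖ := by rw [joinPt_parts]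
    _ ≤ ‖xPart (Fop A z)‖ + ‖yPart (Fop A z)‖ := norm_join_le _ _
    _ ≤ opNorm A * (1 + Real.sqrt d1) + opNorm A * (1 + Real.sqrt d2) := add_le_add hFx hFy
    _ = opNorm A * (2 + Real.sqrt d1 + Real.sqrt d2) := by ring

end SPRMAux
namespace SPRMAux

open Finset

variable {d d1 d2 : ℕ}

lemma normPart_dim_one {u : Vec 1} (hu : u ∈ clippedSet 1) : normPart u = WithLp.toLp 2 (fun _ => 1) := by
  ext i
  have hsum : ∑ j, |u j| = u 0 := by
    rw [Fin.sum_univ_one, abs_of_nonneg (hu.1 0)]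
  have hu0 : (0:ℝ) < u 0 := by
    have := hu.2
    rw [Fin.sum_univ_one] at this
    linarith
  have hi : i = 0 := Subsingleton.elim i 0
  rw [normPart_apply, hsum, hi]
  field_simp

lemma mvY_sub (A : Matrix (Fin d1) (Fin d2) ℝ) (y y' : Vec d2) :
    mvY A y - mvY A y' = mvY A (y - y') := by
  ext i
  show mvY A y i - mvY A y' i = _
  simp only [mvY, ← Finset.sum_sub_distrib]
  apply Finset.sum_congr rfl; intro j _
  have : (y - y') j = y j - y' j := rfl
  rw [this]; ring

lemma tvX_sub (A : Matrix (Fin d1) (Fin d2) ℝ) (x x' : Vec d1) :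
    tvX A x - tvX A x' = tvX A (x - x') := by
  ext j
  show tvX A x j - tvX A x' j = _
  simp only [tvX, ← Finset.sum_sub_distrib]
  apply Finset.sum_congr rfl; intro i _
  have : (x - x') i = x i - x' i := rfl
  rw [this]; ring


lemma num_poly {k : ℝ} (hk0 : 0 < k) (hk2 : 2 ≤ k ^ 2) :
    (1 + 2 * k) ^ 2 * (1 + k) ^ 2 ≤ 24 * (k ^ 2) ^ 2 := by
  have hk1 : 1 ≤ k := by nlinarith
  have h4 : 2 * k ^ 2 ≤ k ^ 4 := by nlinarith [sq_nonneg k]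
  have h3 : 2 * k ^ 3 ≤ k ^ 4 + k ^ 2 := by nlinarith [sq_nonneg (k ^ 2 - k)]
  have hlin : 2 * k ≤ k ^ 2 + 1 := by nlinarith [sq_nonneg (k - 1)]
  nlinarith [h4, h3, hlin, hk2, sq_nonneg k]

lemma key_ineq {σ k p q Δx Δy : ℝ} (hσ : 0 ≤ σ) (hk0 : 0 < k) (hk2 : 2 ≤ k ^ 2)
    (hp : 0 ≤ p) (hq : 0 ≤ q) (hx0 : 0 ≤ Δx) (hy0 : 0 ≤ Δy)
    (hx : Δx ≤ (1 + k) * p) (hy : Δy ≤ (1 + k) * q) :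
    (σ * Δy + k * (σ * (Δx + Δy))) ^ 2 + (σ * Δx + k * (σ * (Δx + Δy))) ^ 2 ≤
      24 * σ ^ 2 * (k ^ 2) ^ 2 * (p ^ 2 + q ^ 2) := by
  have hr : Δx ^ 2 + Δy ^ 2 ≤ (1 + k) ^ 2 * (p ^ 2 + q ^ 2) := by
    have e1 : Δx ^ 2 ≤ ((1 + k) * p) ^ 2 := pow_le_pow_left₀ hx0 hx 2
    have e2 : Δy ^ 2 ≤ ((1 + k) * q) ^ 2 := pow_le_pow_left₀ hy0 hy 2
    nlinarith [e1, e2]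
  have hS : (Δx + Δy) ^ 2 ≤ 2 * (Δx ^ 2 + Δy ^ 2) := by nlinarith [sq_nonneg (Δx - Δy)]
  have expand : (σ * Δy + k * (σ * (Δx + Δy))) ^ 2 + (σ * Δx + k * (σ * (Δx + Δy))) ^ 2 =
      σ ^ 2 * ((Δx ^ 2 + Δy ^ 2) + (2 * k + 2 * k ^ 2) * (Δx + Δy) ^ 2) := by ring
  have h2k : (0:ℝ) ≤ 2 * k + 2 * k ^ 2 := by positivity
  have step1 : (Δx ^ 2 + Δy ^ 2) + (2 * k + 2 * k ^ 2) * (Δx + Δy) ^ 2 ≤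
      (1 + 2 * k) ^ 2 * (Δx ^ 2 + Δy ^ 2) := by
    nlinarith [mul_le_mul_of_nonneg_left hS h2k]
  have hpq : (0:ℝ) ≤ p ^ 2 + q ^ 2 := by positivity
  have step2 : (1 + 2 * k) ^ 2 * (Δx ^ 2 + Δy ^ 2) ≤
      (1 + 2 * k) ^ 2 * ((1 + k) ^ 2 * (p ^ 2 + q ^ 2)) :=
    mul_le_mul_of_nonneg_left hr (by positivity)
  have step3 : (1 + 2 * k) ^ 2 * ((1 + k) ^ 2 * (p ^ 2 + q ^ 2)) ≤
      24 * (k ^ 2) ^ 2 * (p ^ 2 + q ^ 2) := by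
    rw [← mul_assoc]
    exact mul_le_mul_of_nonneg_right (num_poly hk0 hk2) hpq
  rw [expand]
  have final : (Δx ^ 2 + Δy ^ 2) + (2 * k + 2 * k ^ 2) * (Δx + Δy) ^ 2 ≤
      24 * (k ^ 2) ^ 2 * (p ^ 2 + q ^ 2) := le_trans step1 (le_trans step2 step3)
  calc σ ^ 2 * ((Δx ^ 2 + Δy ^ 2) + (2 * k + 2 * k ^ 2) * (Δx + Δy) ^ 2)
      ≤ σ ^ 2 * (24 * (k ^ 2) ^ 2 * (p ^ 2 + q ^ 2)) :=
        mul_le_mul_of_nonneg_left final (by positivity)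
    _ = 24 * σ ^ 2 * (k ^ 2) ^ 2 * (p ^ 2 + q ^ 2) := by ring

set_option maxHeartbeats 1000000 in
/-- Key Lipschitz estimate for the regret operator, with a (weaker) constant `2 · L_F`. -/
lemma Fop_lip (hd1 : 1 ≤ d1) (hd2 : 1 ≤ d2) (A : Matrix (Fin d1) (Fin d2) ℝ)
    {a b : Joint d1 d2} (ha : a ∈ ZgeSet d1 d2) (hb : b ∈ ZgeSet d1 d2) :
    ‖Fop A a - Fop A b‖ ≤ 2 * LF A * ‖a - b‖ := by
  have hop : (0:ℝ) ≤ opNorm A := norm_nonneg _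
  have hLF0 : (0:ℝ) ≤ LF A := by
    apply mul_nonneg (mul_nonneg (Real.sqrt_nonneg _) hop)
    exact le_trans (by positivity : (0:ℝ) ≤ (d1:ℝ)) (le_max_left _ _)
  by_cases hone : d1 = 1 ∧ d2 = 1
  · obtain ⟨h1, h2⟩ := hone
    subst h1; subst h2
    have hxa : normPart (xPart a) = normPart (xPart b) := by
      rw [normPart_dim_one ha.1, normPart_dim_one hb.1]
    have hya : normPart (yPart a) = normPart (yPart b) := by
      rw [normPart_dim_one ha.2, normPart_dim_one hb.2]
    have : Fop A a = Fop A b := by unfold Fop; rw [hxa, hya]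
    rw [this, sub_self, norm_zero]
    positivity
  · -- max d1 d2 ≥ 2
    have hD2 : (2:ℝ) ≤ max (d1:ℝ) (d2:ℝ) := by
      rcases Nat.lt_or_ge d1 2 with h | h
      · have hd2' : 2 ≤ d2 := by
          rcases Nat.lt_or_ge d2 2 with h' | h'
          · exact absurd ⟨by omega, by omega⟩ hone
          · exact h'
        have : (2:ℝ) ≤ (d2:ℝ) := by exact_mod_cast hd2'
        exact le_trans this (le_max_right _ _)
      · have : (2:ℝ) ≤ (d1:ℝ) := by exact_mod_cast h
        exact le_trans this (le_max_left _ _)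
    set D : ℝ := max (d1:ℝ) (d2:ℝ) with hD
    set k : ℝ := Real.sqrt D with hk
    have hk0 : 0 < k := Real.sqrt_pos.2 (by linarith)
    have hk2 : k ^ 2 = D := Real.sq_sqrt (by linarith)
    have hkd1 : Real.sqrt d1 ≤ k := Real.sqrt_le_sqrt (le_max_left _ _)
    have hkd2 : Real.sqrt d2 ≤ k := Real.sqrt_le_sqrt (le_max_right _ _)
    set nxa := normPart (xPart a); set nya := normPart (yPart a)
    set nxb := normPart (xPart b); set nyb := normPart (yPart b)
    set σ := opNorm A with hσ
    set p := ‖xPart a - xPart b‖ with hp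
    set q := ‖yPart a - yPart b‖ with hq
    have hp0 : 0 ≤ p := norm_nonneg _
    have hq0 : 0 ≤ q := norm_nonneg _
    have hDx : ‖nxa - nxb‖ ≤ (1 + k) * p := by
      refine le_trans (normPart_lip ha.1 hb.1) ?_
      rw [← xPart_sub]
      apply mul_le_mul_of_nonneg_right _ (norm_nonneg _)
      linarith
    have hDy : ‖nya - nyb‖ ≤ (1 + k) * q := by
      refine le_trans (normPart_lip ha.2 hb.2) ?_
      rw [← yPart_sub]
      apply mul_le_mul_of_nonneg_right _ (norm_nonneg _)
      linarith
    set Δx := ‖nxa - nxb‖ with hΔx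
    set Δy := ‖nya - nyb‖ with hΔy
    have hΔx0 : 0 ≤ Δx := norm_nonneg _
    have hΔy0 : 0 ≤ Δy := norm_nonneg _
    -- payoff difference
    have hnxa : ‖nxa‖ ≤ 1 := simplex_norm_le_one (normPart_mem ha.1)
    have hnyb : ‖nyb‖ ≤ 1 := simplex_norm_le_one (normPart_mem hb.2)
    have hV : |payoff A nxa nya - payoff A nxb nyb| ≤ σ * (Δx + Δy) :=
      payoff_sub_le A hnxa hnyb
    -- block bounds
    have hb1 : ‖xPart (Fop A a - Fop A b)‖ ≤ σ * Δy + Real.sqrt d1 * (σ * (Δx + Δy)) := by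
      rw [xPart_sub, xPart_Fop, xPart_Fop]
      have hre : mvY A nya - payoff A nxa nya • onesV d1 -
          (mvY A nyb - payoff A nxb nyb • onesV d1) =
          mvY A (nya - nyb) + (-(payoff A nxa nya - payoff A nxb nyb)) • onesV d1 := by
        rw [← mvY_sub, neg_smul, sub_smul]; abel
      rw [hre]
      calc ‖mvY A (nya - nyb) + (-(payoff A nxa nya - payoff A nxb nyb)) • onesV d1‖
          ≤ ‖mvY A (nya - nyb)‖ + ‖(-(payoff A nxa nya - payoff A nxb nyb)) • onesV d1‖ :=
            norm_add_le _ _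
        _ ≤ σ * Δy + |payoff A nxa nya - payoff A nxb nyb| * Real.sqrt d1 := by
            rw [norm_smul, Real.norm_eq_abs, norm_onesV, abs_neg]
            exact add_le_add (norm_mvY_le A _) le_rfl
        _ ≤ σ * Δy + Real.sqrt d1 * (σ * (Δx + Δy)) := by
            rw [add_le_add_iff_left, mul_comm]
            exact mul_le_mul_of_nonneg_left hV (Real.sqrt_nonneg _)
    have hb2 : ‖yPart (Fop A a - Fop A b)‖ ≤ σ * Δx + Real.sqrt d2 * (σ * (Δx + Δy)) := by
      rw [yPart_sub, yPart_Fop, yPart_Fop]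
      have hre : payoff A nxa nya • onesV d2 - tvX A nxa -
          (payoff A nxb nyb • onesV d2 - tvX A nxb) =
          (-(tvX A nxa - tvX A nxb)) + (payoff A nxa nya - payoff A nxb nyb) • onesV d2 := by
        rw [sub_smul]; abel
      rw [hre]
      calc ‖(-(tvX A nxa - tvX A nxb)) + (payoff A nxa nya - payoff A nxb nyb) • onesV d2‖
          ≤ ‖-(tvX A nxa - tvX A nxb)‖ + ‖(payoff A nxa nya - payoff A nxb nyb) • onesV d2‖ :=
            norm_add_le _ _
        _ ≤ σ * Δx + |payoff A nxa nya - payoff A nxb nyb| * Real.sqrt d2 := by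
            rw [norm_neg, norm_smul, Real.norm_eq_abs, norm_onesV, tvX_sub]
            exact add_le_add (norm_tvX_le A _) le_rfl
        _ ≤ σ * Δx + Real.sqrt d2 * (σ * (Δx + Δy)) := by
            rw [add_le_add_iff_left, mul_comm]
            exact mul_le_mul_of_nonneg_left hV (Real.sqrt_nonneg _)
    -- combine
    have hsplit : ‖Fop A a - Fop A b‖ ^ 2 =
        ‖xPart (Fop A a - Fop A b)‖ ^ 2 + ‖yPart (Fop A a - Fop A b)‖ ^ 2 :=
      norm_split_sq _
    have hab : ‖a - b‖ ^ 2 = p ^ 2 + q ^ 2 := by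
      rw [hp, hq, ← xPart_sub, ← yPart_sub]; exact norm_split_sq _
    have hsq : ‖Fop A a - Fop A b‖ ^ 2 ≤ (2 * LF A) ^ 2 * ‖a - b‖ ^ 2 := by
      rw [hsplit, hab]
      have e1 : ‖xPart (Fop A a - Fop A b)‖ ^ 2 ≤ (σ * Δy + k * (σ * (Δx + Δy))) ^ 2 := by
        apply pow_le_pow_left₀ (norm_nonneg _)
        refine le_trans hb1 ?_
        have : Real.sqrt d1 * (σ * (Δx + Δy)) ≤ k * (σ * (Δx + Δy)) :=
          mul_le_mul_of_nonneg_right hkd1 (by positivity)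
        linarith
      have e2 : ‖yPart (Fop A a - Fop A b)‖ ^ 2 ≤ (σ * Δx + k * (σ * (Δx + Δy))) ^ 2 := by
        apply pow_le_pow_left₀ (norm_nonneg _)
        refine le_trans hb2 ?_
        have : Real.sqrt d2 * (σ * (Δx + Δy)) ≤ k * (σ * (Δx + Δy)) :=
          mul_le_mul_of_nonneg_right hkd2 (by positivity)
        linarith
      have hLFsq : (2 * LF A) ^ 2 = 24 * σ ^ 2 * D ^ 2 := by
        have h6 : Real.sqrt 6 ^ 2 = 6 := Real.sq_sqrt (by norm_num)
        have : LF A = Real.sqrt 6 * σ * D := by rw [LF, ← hσ, ← hD]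
        rw [this]
        calc (2 * (Real.sqrt 6 * σ * D)) ^ 2 = Real.sqrt 6 ^ 2 * (4 * σ ^ 2 * D ^ 2) := by ring
          _ = 24 * σ ^ 2 * D ^ 2 := by rw [h6]; ring
      rw [hLFsq]
      have hDk : D = k ^ 2 := hk2.symm
      have key := key_ineq hop hk0 (by rw [hk2]; exact hD2) hp0 hq0 hΔx0 hΔy0 hDx hDy
      calc ‖xPart (Fop A a - Fop A b)‖ ^ 2 + ‖yPart (Fop A a - Fop A b)‖ ^ 2
          ≤ (σ * Δy + k * (σ * (Δx + Δy))) ^ 2 + (σ * Δx + k * (σ * (Δx + Δy))) ^ 2 :=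
            add_le_add e1 e2
        _ ≤ 24 * σ ^ 2 * (k ^ 2) ^ 2 * (p ^ 2 + q ^ 2) := key
        _ = 24 * σ ^ 2 * D ^ 2 * (p ^ 2 + q ^ 2) := by rw [← hDk]
    have h2LF : 0 ≤ 2 * LF A * ‖a - b‖ := by positivity
    apply le_of_sq_le' (norm_nonneg _) h2LF
    calc ‖Fop A a - Fop A b‖ ^ 2 ≤ (2 * LF A) ^ 2 * ‖a - b‖ ^ 2 := hsq
      _ = (2 * LF A * ‖a - b‖) ^ 2 := by ring

end SPRMAux
namespace SPRMAux

open Finset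

variable {d d1 d2 : ℕ}

lemma cont_eval_vec (i : Fin d) : Continuous (fun u : Vec d => u i) :=
  (EuclideanSpace.proj (𝕜 := ℝ) i).continuous

lemma cont_eval_joint (s : Fin d1 ⊕ Fin d2) : Continuous (fun z : Joint d1 d2 => z s) :=
  (EuclideanSpace.proj (𝕜 := ℝ) s).continuous

lemma clippedSet_closed : IsClosed (clippedSet d) := by
  have h1 : IsClosed {u : Vec d | ∀ i, 0 ≤ u i} := by
    have : {u : Vec d | ∀ i, 0 ≤ u i} = ⋂ i, {u : Vec d | 0 ≤ u i} := by
      ext u; simp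
    rw [this]
    exact isClosed_iInter fun i => isClosed_le continuous_const (cont_eval_vec i)
  have h2 : IsClosed {u : Vec d | 1 ≤ ∑ i, u i} :=
    isClosed_le continuous_const (by exact continuous_finset_sum _ fun i _ => cont_eval_vec i)
  exact h1.inter h2

lemma simplexSet_closed : IsClosed (simplexSet d) := by
  have h1 : IsClosed {u : Vec d | ∀ i, 0 ≤ u i} := by
    have : {u : Vec d | ∀ i, 0 ≤ u i} = ⋂ i, {u : Vec d | 0 ≤ u i} := by
      ext u; simp
    rw [this]
    exact isClosed_iInter fun i => isClosed_le continuous_const (cont_eval_vec i)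
  have h2 : IsClosed {u : Vec d | ∑ i, u i = 1} :=
    isClosed_eq (by exact continuous_finset_sum _ fun i _ => cont_eval_vec i) continuous_const
  exact h1.inter h2

lemma simplexSet_compact : IsCompact (simplexSet d) := by
  apply Metric.isCompact_of_isClosed_isBounded simplexSet_closed
  apply Bornology.IsBounded.subset (Metric.isBounded_closedBall (x := (0 : Vec d)) (r := 1))
  intro x hx
  rw [Metric.mem_closedBall, dist_zero_right]
  exact simplex_norm_le_one hx

lemma simplexSet_convex : Convex ℝ (simplexSet d) := by
  intro u hu v hv a b ha hb hab
  have happ : ∀ i, (a • u + b • v) i = a * u i + b * v i := fun i => rfl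
  constructor
  · intro i
    rw [happ]
    have := hu.1 i; have := hv.1 i
    positivity
  · have : ∑ i, (a • u + b • v) i = a * (∑ i, u i) + b * (∑ i, v i) := by
      simp_rw [happ, Finset.sum_add_distrib, Finset.mul_sum]
    rw [this, hu.2, hv.2]; linarith

lemma ZgeSet_closed : IsClosed (ZgeSet d1 d2) := by
  have hx : IsClosed {z : Joint d1 d2 | xPart z ∈ clippedSet d1} := by
    have h1 : IsClosed {z : Joint d1 d2 | ∀ i, 0 ≤ xPart z i} := by
      have : {z : Joint d1 d2 | ∀ i, 0 ≤ xPart z i} =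
          ⋂ i, {z : Joint d1 d2 | 0 ≤ z (Sum.inl i)} := by ext z; simp [xPart]
      rw [this]
      exact isClosed_iInter fun i => isClosed_le continuous_const (cont_eval_joint _)
    have h2 : IsClosed {z : Joint d1 d2 | 1 ≤ ∑ i, xPart z i} := by
      have : {z : Joint d1 d2 | 1 ≤ ∑ i, xPart z i} =
          {z : Joint d1 d2 | 1 ≤ ∑ i, z (Sum.inl i)} := by ext z; simp [xPart]
      rw [this]
      exact isClosed_le continuous_const
        (by exact continuous_finset_sum _ fun i _ => cont_eval_joint _)
    exact h1.inter h2
  have hy : IsClosed {z : Joint d1 d2 | yPart z ∈ clippedSet d2} := by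
    have h1 : IsClosed {z : Joint d1 d2 | ∀ j, 0 ≤ yPart z j} := by
      have : {z : Joint d1 d2 | ∀ j, 0 ≤ yPart z j} =
          ⋂ j, {z : Joint d1 d2 | 0 ≤ z (Sum.inr j)} := by ext z; simp [yPart]
      rw [this]
      exact isClosed_iInter fun j => isClosed_le continuous_const (cont_eval_joint _)
    have h2 : IsClosed {z : Joint d1 d2 | 1 ≤ ∑ j, yPart z j} := by
      have : {z : Joint d1 d2 | 1 ≤ ∑ j, yPart z j} =
          {z : Joint d1 d2 | 1 ≤ ∑ j, z (Sum.inr j)} := by ext z; simp [yPart]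
      rw [this]
      exact isClosed_le continuous_const
        (by exact continuous_finset_sum _ fun j _ => cont_eval_joint _)
    exact h1.inter h2
  exact hx.inter hy

lemma ZgeSet_convex : Convex ℝ (ZgeSet d1 d2) := by
  intro u hu v hv a b ha hb hab
  have hxapp : ∀ i, xPart (a • u + b • v) i = a * xPart u i + b * xPart v i := fun i => rfl
  have hyapp : ∀ j, yPart (a • u + b • v) j = a * yPart u j + b * yPart v j := fun j => rfl
  constructor
  · constructor
    · intro i; rw [hxapp]
      have := hu.1.1 i; have := hv.1.1 i; positivity
    · have : ∑ i, xPart (a • u + b • v) i = a * (∑ i, xPart u i) + b * (∑ i, xPart v i) := by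
        simp_rw [hxapp, Finset.sum_add_distrib, Finset.mul_sum]
      rw [this]
      nlinarith [hu.1.2, hv.1.2]
  · constructor
    · intro j; rw [hyapp]
      have := hu.2.1 j; have := hv.2.1 j; positivity
    · have : ∑ j, yPart (a • u + b • v) j = a * (∑ j, yPart u j) + b * (∑ j, yPart v j) := by
        simp_rw [hyapp, Finset.sum_add_distrib, Finset.mul_sum]
      rw [this]
      nlinarith [hu.2.2, hv.2.2]

lemma unif_mem_simplex (hd : 1 ≤ d) : (WithLp.toLp 2 (fun _ => (d : ℝ)⁻¹) : Vec d) ∈ simplexSet d := by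
  have hd0 : (0:ℝ) < d := by exact_mod_cast hd
  constructor
  · intro i; show (0:ℝ) ≤ (d:ℝ)⁻¹; positivity
  · simp [Finset.sum_const, Finset.card_univ]
    field_simp

lemma ZgeSet_nonempty (hd1 : 1 ≤ d1) (hd2 : 1 ≤ d2) : (ZgeSet d1 d2).Nonempty := by
  refine ⟨joinPt (WithLp.toLp 2 (fun _ => (d1 : ℝ)⁻¹)) (WithLp.toLp 2 (fun _ => (d2 : ℝ)⁻¹)), ?_, ?_⟩
  · rw [xPart_joinPt]; exact simplex_mem_clipped (unif_mem_simplex hd1)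
  · rw [yPart_joinPt]; exact simplex_mem_clipped (unif_mem_simplex hd2)

/-! ### Projection lemmas -/

variable {E : Type*} [NormedAddCommGroup E] [InnerProductSpace ℝ E] [CompleteSpace E]

lemma projOn_spec {S : Set E} (hne : S.Nonempty) (hcl : IsClosed S) (hcx : Convex ℝ S)
    (u : E) : projOn S u ∈ S ∧ ∀ q ∈ S, ‖u - projOn S u‖ ≤ ‖u - q‖ := by
  have hex : ∃ p ∈ S, ∀ q ∈ S, ‖u - p‖ ≤ ‖u - q‖ := by
    obtain ⟨v, hvS, hv⟩ := exists_norm_eq_iInf_of_complete_convex hne hcl.isComplete hcx u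
    refine ⟨v, hvS, fun q hq => ?_⟩
    have hbdd : BddBelow (Set.range fun w : S => ‖u - (w : E)‖) :=
      ⟨0, by rintro r ⟨w, rfl⟩; exact norm_nonneg _⟩
    rw [hv]
    exact ciInf_le hbdd ⟨q, hq⟩
  rw [projOn, dif_pos hex]
  exact hex.choose_spec

lemma projOn_inner_le {S : Set E} (hne : S.Nonempty) (hcl : IsClosed S) (hcx : Convex ℝ S)
    (u : E) {q : E} (hq : q ∈ S) : ⟪u - projOn S u, q - projOn S u⟫ ≤ 0 := by
  obtain ⟨hmem, hmin⟩ := projOn_spec hne hcl hcx u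
  haveI := hne.to_subtype
  have hbdd : BddBelow (Set.range fun w : S => ‖u - (w : E)‖) :=
    ⟨0, by rintro r ⟨w, rfl⟩; exact norm_nonneg _⟩
  have heq : ‖u - projOn S u‖ = ⨅ w : S, ‖u - (w : E)‖ :=
    le_antisymm (le_ciInf fun w => hmin w w.2) (ciInf_le hbdd ⟨_, hmem⟩)
  exact (norm_eq_iInf_iff_real_inner_le_zero hcx hmem).1 heq q hq

lemma projOn_dist_le {S : Set E} (hne : S.Nonempty) (hcl : IsClosed S) (hcx : Convex ℝ S)
    (u : E) {w : E} (hw : w ∈ S) : ‖projOn S u - w‖ ≤ 2 * ‖u - w‖ := by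
  obtain ⟨hmem, hmin⟩ := projOn_spec hne hcl hcx u
  calc ‖projOn S u - w‖ = ‖(projOn S u - u) + (u - w)‖ := by abel_nf
    _ ≤ ‖projOn S u - u‖ + ‖u - w‖ := norm_add_le _ _
    _ ≤ ‖u - w‖ + ‖u - w‖ := by
        rw [norm_sub_rev]
        linarith [hmin w hw]
    _ = 2 * ‖u - w‖ := by ring

end SPRMAux
namespace SPRMAux

open Finset

variable {d d1 d2 : ℕ}

lemma single_mem_simplex (j : Fin d) :
    (EuclideanSpace.single j (1:ℝ) : Vec d) ∈ simplexSet d := by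
  constructor
  · intro i
    rw [EuclideanSpace.single_apply]
    split <;> norm_num
  · simp [EuclideanSpace.single_apply]

lemma decomp_single (u : Vec d) : u = ∑ i, u i • (EuclideanSpace.single i (1:ℝ) : Vec d) := by
  ext k
  have h1 : (∑ i, u i • (EuclideanSpace.single i (1:ℝ) : Vec d)) k =
      ∑ i, (u i • (EuclideanSpace.single i (1:ℝ) : Vec d)) k := by
    induction (Finset.univ : Finset (Fin d)) using Finset.induction with
    | empty => simp
    | insert _ _ h ih =>
        rw [Finset.sum_insert h, Finset.sum_insert h, ← ih]; rfl
  rw [h1]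
  have h2 : ∀ i, (u i • (EuclideanSpace.single i (1:ℝ) : Vec d)) k =
      u i * (if k = i then (1:ℝ) else 0) := by
    intro i
    have : (u i • (EuclideanSpace.single i (1:ℝ) : Vec d)) k =
        u i * (EuclideanSpace.single i (1:ℝ) : Vec d) k := rfl
    rw [this, EuclideanSpace.single_apply]
  simp_rw [h2]
  simp

lemma clm_repr (f : Vec d →L[ℝ] ℝ) (u : Vec d) :
    f u = ∑ i, u i * f (EuclideanSpace.single i (1:ℝ)) := by
  conv_lhs => rw [decomp_single u]
  rw [map_sum]
  apply Finset.sum_congr rfl; intro i _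
  rw [ContinuousLinearMap.map_smul, smul_eq_mul]

lemma cont_mvY (A : Matrix (Fin d1) (Fin d2) ℝ) (i : Fin d1) :
    Continuous (fun y : Vec d2 => mvY A y i) := by
  show Continuous (fun y : Vec d2 => ∑ j, A i j * y j)
  apply continuous_finset_sum
  intro j _
  exact (continuous_const.mul (cont_eval_vec j))

lemma cont_tvX (A : Matrix (Fin d1) (Fin d2) ℝ) (j : Fin d2) :
    Continuous (fun x : Vec d1 => tvX A x j) := by
  show Continuous (fun x : Vec d1 => ∑ i, A i j * x i)
  apply continuous_finset_sum
  intro i _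
  exact (continuous_const.mul (cont_eval_vec i))

lemma cont_mvY_full (A : Matrix (Fin d1) (Fin d2) ℝ) :
    Continuous (fun y : Vec d2 => mvY A y) := by
  have h : (fun y : Vec d2 => mvY A y) =
      fun y => (LinearMap.toContinuousLinearMap (Matrix.toEuclideanLin A)) y := by
    funext y; exact mvY_eq A y
  rw [h]
  exact (LinearMap.toContinuousLinearMap (Matrix.toEuclideanLin A)).continuous

lemma payoff_ge_of_coords {A : Matrix (Fin d1) (Fin d2) ℝ} {y : Vec d2} {v : ℝ}
    (hy : ∀ i, v ≤ mvY A y i) {x : Vec d1} (hx : x ∈ simplexSet d1) :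
    v ≤ payoff A x y := by
  rw [payoff_eq_inner_mv, inner_vec_sum]
  calc v = ∑ i, x i * v := by rw [← Finset.sum_mul, hx.2, one_mul]
    _ ≤ ∑ i, x i * mvY A y i :=
      Finset.sum_le_sum fun i _ => mul_le_mul_of_nonneg_left (hy i) (hx.1 i)

lemma payoff_le_of_coords {A : Matrix (Fin d1) (Fin d2) ℝ} {x : Vec d1} {v : ℝ}
    (hx : ∀ j, tvX A x j ≤ v) {y : Vec d2} (hy : y ∈ simplexSet d2) :
    payoff A x y ≤ v := by
  rw [payoff_eq_inner_tv, inner_vec_sum]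
  calc ∑ j, y j * tvX A x j ≤ ∑ j, y j * v :=
      Finset.sum_le_sum fun j _ => mul_le_mul_of_nonneg_left (hx j) (hy.1 j)
    _ = v := by rw [← Finset.sum_mul, hy.2, one_mul]

set_option maxHeartbeats 1000000 in
/-- Existence of a Nash equilibrium (minimax theorem) for matrix games. -/
lemma nash_exists (hd1 : 1 ≤ d1) (hd2 : 1 ≤ d2) (A : Matrix (Fin d1) (Fin d2) ℝ) :
    ∃ xs ∈ simplexSet d1, ∃ ys ∈ simplexSet d2,
      ∀ x ∈ simplexSet d1, ∀ y ∈ simplexSet d2, payoff A xs y ≤ payoff A x ys := by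
  haveI : NeZero d1 := ⟨by omega⟩
  haveI : NeZero d2 := ⟨by omega⟩
  have hne1 : (Finset.univ : Finset (Fin d1)).Nonempty := Finset.univ_nonempty
  set g : Vec d2 → ℝ := fun y => Finset.univ.inf' hne1 (fun i => mvY A y i) with hg
  have hgc : Continuous g :=
    Continuous.finset_inf'_apply hne1 (fun i _ => cont_mvY A i)
  obtain ⟨ys, hysmem, hysmax⟩ := simplexSet_compact.exists_isMaxOn
    ⟨_, unif_mem_simplex hd2⟩ hgc.continuousOn
  set v : ℝ := g ys with hv
  have hcoords : ∀ i, v ≤ mvY A ys i := fun i => Finset.inf'_le _ (Finset.mem_univ i)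
  -- approximate optimal strategies for the x-player
  have hstep : ∀ ε : ℝ, 0 < ε → ∃ x ∈ simplexSet d1, ∀ j, tvX A x j ≤ v + ε := by
    intro ε hε
    set K : Set (Vec d1) := (fun y => mvY A y) '' simplexSet d2 with hK
    have hKcx : Convex ℝ K := by
      rintro _ ⟨y1, hy1, rfl⟩ _ ⟨y2, hy2, rfl⟩ a b ha hb hab
      refine ⟨a • y1 + b • y2, simplexSet_convex hy1 hy2 ha hb hab, ?_⟩
      ext i
      show mvY A (a • y1 + b • y2) i = (a • mvY A y1 + b • mvY A y2) i
      have h2 : (a • mvY A y1 + b • mvY A y2) i = a * mvY A y1 i + b * mvY A y2 i := rfl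
      rw [h2]
      simp only [mvY]
      rw [Finset.mul_sum, Finset.mul_sum, ← Finset.sum_add_distrib]
      apply Finset.sum_congr rfl; intro j _
      have : (a • y1 + b • y2) j = a * y1 j + b * y2 j := rfl
      rw [this]; ring
    have hKcp : IsCompact K := simplexSet_compact.image (cont_mvY_full A)
    set T : Set (Vec d1) := {u | ∀ i, v + ε ≤ u i} with hT
    have hTcx : Convex ℝ T := by
      intro u1 h1 u2 h2 a b ha hb hab
      intro i
      have happ : (a • u1 + b • u2) i = a * u1 i + b * u2 i := rfl
      rw [happ]
      have e1 := mul_le_mul_of_nonneg_left (h1 i) ha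
      have e2 := mul_le_mul_of_nonneg_left (h2 i) hb
      have e3 : a * (v + ε) + b * (v + ε) = v + ε := by rw [← add_mul, hab, one_mul]
      linarith
    have hTcl : IsClosed T := by
      have : T = ⋂ i, {u : Vec d1 | v + ε ≤ u i} := by ext u; simp [hT]
      rw [this]
      exact isClosed_iInter fun i => isClosed_le continuous_const (cont_eval_vec i)
    have hdisj : Disjoint K T := by
      rw [Set.disjoint_left]
      rintro _ ⟨y, hy, rfl⟩ hT'
      have h1 : g y ≤ v := hysmax hy
      have h2 : v + ε ≤ g y := Finset.le_inf' hne1 _ (fun i _ => hT' i)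
      linarith
    obtain ⟨f, u', v', hfK, huv, hfT⟩ :=
      geometric_hahn_banach_compact_closed hKcx hKcp hTcx hTcl hdisj
    set c : Fin d1 → ℝ := fun i => f (EuclideanSpace.single i 1) with hc
    set pt0 : Vec d1 := (v + ε) • onesV d1 with hpt0
    have hpt0T : pt0 ∈ T := by
      intro i
      have : pt0 i = (v + ε) * 1 := rfl
      rw [this]; simp
    have hc0 : ∀ i, 0 ≤ c i := by
      intro i
      by_contra hneg
      push_neg at hneg
      obtain ⟨s, hs⟩ : ∃ s : ℝ, s = (f pt0 - v') / (-(c i)) + 1 := ⟨_, rfl⟩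
      have hfpt0v : v' < f pt0 := hfT pt0 hpt0T
      have hci2 : 0 < -(c i) := by linarith
      have hs0 : 0 < s := by
        have : 0 ≤ (f pt0 - v') / (-(c i)) := div_nonneg (by linarith) hci2.le
        rw [hs]; linarith
      have hmem : pt0 + s • (EuclideanSpace.single i (1:ℝ) : Vec d1) ∈ T := by
        intro k
        have happ : (pt0 + s • (EuclideanSpace.single i (1:ℝ) : Vec d1)) k =
            (v + ε) * 1 + s * (EuclideanSpace.single i (1:ℝ) : Vec d1) k := rfl
        rw [happ, EuclideanSpace.single_apply]
        split
        · nlinarith [hs0]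
        · norm_num
      have hval : f (pt0 + s • (EuclideanSpace.single i (1:ℝ) : Vec d1)) =
          f pt0 + s * c i := by
        rw [map_add, ContinuousLinearMap.map_smul, smul_eq_mul,
          ContinuousLinearMap.map_smul, smul_eq_mul]
      have hlt := hfT _ hmem
      rw [hval] at hlt
      have hsci : s * c i = -(f pt0 - v') - (-(c i)) := by
        rw [hs]
        have : c i ≠ 0 := by linarith
        field_simp
        ring
      rw [hsci] at hlt
      linarith
    have hKne : mvY A ys ∈ K := ⟨ys, hysmem, rfl⟩
    have hcsum : 0 < ∑ i, c i := by
      rcases (Finset.sum_nonneg fun i _ => hc0 i).lt_or_eq with h | h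
      · exact h
      · exfalso
        have hall : ∀ i ∈ Finset.univ, c i = 0 :=
          (Finset.sum_eq_zero_iff_of_nonneg fun i _ => hc0 i).1 h.symm
        have hf0 : ∀ u : Vec d1, f u = 0 := by
          intro u
          rw [clm_repr f u]
          apply Finset.sum_eq_zero
          intro i _
          rw [show f (EuclideanSpace.single i (1:ℝ)) = c i from rfl,
            hall i (Finset.mem_univ i), mul_zero]
        have h1 := hfK _ hKne
        have h2 := hfT pt0 hpt0T
        rw [hf0] at h1
        rw [hf0] at h2
        linarith
    set xe : Vec d1 := (∑ i, c i)⁻¹ • (WithLp.toLp 2 (fun i => c i) : Vec d1) with hxe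
    have hxemem : xe ∈ simplexSet d1 := by
      constructor
      · intro i
        have : xe i = (∑ i, c i)⁻¹ * c i := rfl
        rw [this]
        exact mul_nonneg (inv_nonneg.2 hcsum.le) (hc0 i)
      · have : ∑ i, xe i = (∑ i, c i)⁻¹ * ∑ i, c i := by
          rw [Finset.mul_sum]
          exact Finset.sum_congr rfl fun i _ => rfl
        rw [this]
        field_simp
    refine ⟨xe, hxemem, fun j => ?_⟩
    set colj : Vec d1 := mvY A (EuclideanSpace.single j (1:ℝ)) with hcolj
    have hcoljK : colj ∈ K := ⟨_, single_mem_simplex j, rfl⟩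
    have hcolval : ∀ i, colj i = A i j := by
      intro i
      have : colj i = ∑ j', A i j' * (EuclideanSpace.single j (1:ℝ) : Vec d2) j' := rfl
      rw [this]
      rw [Finset.sum_eq_single j]
      · rw [EuclideanSpace.single_apply, if_pos rfl, mul_one]
      · intro b _ hb
        rw [EuclideanSpace.single_apply, if_neg hb, mul_zero]
      · intro h; exact absurd (Finset.mem_univ j) h
    have hfcol : f colj = ∑ i, A i j * c i := by
      rw [clm_repr f colj]
      apply Finset.sum_congr rfl; intro i _
      rw [hcolval i, show f (EuclideanSpace.single i (1:ℝ)) = c i from rfl]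
    have hfpt0 : f pt0 = (v + ε) * ∑ i, c i := by
      rw [clm_repr f pt0]
      rw [Finset.mul_sum]
      apply Finset.sum_congr rfl; intro i _
      have h1 : pt0 i = (v + ε) * 1 := rfl
      rw [h1, show f (EuclideanSpace.single i (1:ℝ)) = c i from rfl]; ring
    have hchain : f colj < (v + ε) * ∑ i, c i := by
      rw [← hfpt0]
      exact lt_trans (lt_trans (hfK _ hcoljK) huv) (hfT pt0 hpt0T)
    have htv : tvX A xe j = (∑ i, c i)⁻¹ * f colj := by
      rw [hfcol, tvX, PiLp.toLp_apply, Finset.mul_sum]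
      apply Finset.sum_congr rfl; intro i _
      have : xe i = (∑ i', c i')⁻¹ * c i := rfl
      rw [this]; ring
    rw [htv]
    have := mul_le_mul_of_nonneg_left hchain.le (inv_nonneg.2 hcsum.le)
    calc (∑ i, c i)⁻¹ * f colj ≤ (∑ i, c i)⁻¹ * ((v + ε) * ∑ i, c i) := this
      _ = v + ε := by field_simp
  -- pass to the limit via compactness
  set Tn : ℕ → Set (Vec d1) :=
    fun n => {x | x ∈ simplexSet d1 ∧ ∀ j, tvX A x j ≤ v + 1 / (n + 1)} with hTn
  have hTncl : ∀ n, IsClosed (Tn n) := by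
    intro n
    have heq : Tn n = simplexSet d1 ∩
        ⋂ j, {x : Vec d1 | tvX A x j ≤ v + 1 / (n + 1)} := by
      ext x
      simp only [hTn, Set.mem_setOf_eq, Set.mem_inter_iff, Set.mem_iInter]
    rw [heq]
    exact simplexSet_closed.inter
      (isClosed_iInter fun j => isClosed_le (cont_tvX A j) continuous_const)
  have hTne : ∀ n, (Tn n).Nonempty := by
    intro n
    obtain ⟨x, hx, hxj⟩ := hstep (1 / (n + 1)) (by positivity)
    exact ⟨x, hx, hxj⟩
  have hTdec : ∀ n, Tn (n + 1) ⊆ Tn n := by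
    intro n x hx
    refine ⟨hx.1, fun j => le_trans (hx.2 j) ?_⟩
    have h1 : (1:ℝ) / (n + 1 + 1) ≤ 1 / (n + 1) := by
      apply div_le_div_of_nonneg_left one_pos.le (by positivity)
      push_cast; linarith
    push_cast at h1 ⊢
    linarith
  have hT0cp : IsCompact (Tn 0) :=
    simplexSet_compact.of_isClosed_subset (hTncl 0) (fun x hx => hx.1)
  obtain ⟨xs, hxs⟩ := IsCompact.nonempty_iInter_of_sequence_nonempty_isCompact_isClosed
    Tn hTdec hTne hT0cp hTncl
  rw [Set.mem_iInter] at hxs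
  have hxsmem : xs ∈ simplexSet d1 := (hxs 0).1
  have hxscoords : ∀ j, tvX A xs j ≤ v := by
    intro j
    by_contra hlt
    push_neg at hlt
    obtain ⟨n, hn⟩ := exists_nat_one_div_lt (sub_pos.2 hlt)
    have := (hxs n).2 j
    linarith
  exact ⟨xs, hxsmem, ys, hysmem, fun x hx y hy =>
    le_trans (payoff_le_of_coords hxscoords hy) (payoff_ge_of_coords hcoords hx)⟩

end SPRMAux
namespace SPRMAux

open Finset

variable {d d1 d2 : ℕ}

lemma dualGap_le (hd1 : 1 ≤ d1) (hd2 : 1 ≤ d2) (A : Matrix (Fin d1) (Fin d2) ℝ)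
    (x : Vec d1) (y : Vec d2) (B : ℝ)
    (h : ∀ x' ∈ simplexSet d1, ∀ y' ∈ simplexSet d2,
      payoff A x y' - payoff A x' y ≤ B) :
    dualGap A x y ≤ B := by
  have hS1ne : ((fun y' => payoff A x y') '' simplexSet d2).Nonempty :=
    ⟨_, ⟨_, unif_mem_simplex hd2, rfl⟩⟩
  have hS2ne : ((fun x' => payoff A x' y) '' simplexSet d1).Nonempty :=
    ⟨_, ⟨_, unif_mem_simplex hd1, rfl⟩⟩
  have key : sSup ((fun y' => payoff A x y') '' simplexSet d2) ≤
      B + sInf ((fun x' => payoff A x' y) '' simplexSet d1) := by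
    apply csSup_le hS1ne
    rintro _ ⟨y', hy', rfl⟩
    have : payoff A x y' - B ≤ sInf ((fun x' => payoff A x' y) '' simplexSet d1) := by
      apply le_csInf hS2ne
      rintro _ ⟨x', hx', rfl⟩
      linarith [h x' hx' y' hy']
    linarith
  rw [dualGap]
  linarith

set_option maxHeartbeats 1600000 in
lemma popov_step {E : Type*} [NormedAddCommGroup E] [InnerProductSpace ℝ E]
    (η lam : ℝ) (hη : 0 < η) (hlam0 : 0 ≤ lam) (hlam : lam ≤ 1 / 4)
    (u u' cc pp ss Ft Fp : E)
    (h1 : ⟪u - η • Ft - u', ss - u'⟫ ≤ 0)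
    (h2 : 0 ≤ ⟪Ft, cc - ss⟫)
    (h3 : ⟪u - η • Fp - cc, u' - cc⟫ ≤ 0)
    (hF : η * ‖Ft - Fp‖ ≤ lam * ‖cc - pp‖) :
    ‖u' - ss‖ ^ 2 + (1 / 2) * ‖u' - cc‖ ^ 2 ≤ ‖u - ss‖ ^ 2 + (1 / 2) * ‖u - pp‖ ^ 2 := by
  have h1' : ⟪u - u', ss - u'⟫ ≤ η * ⟪Ft, ss - u'⟫ := by
    have e : u - η • Ft - u' = (u - u') - η • Ft := sub_right_comm u (η • Ft) u'
    rw [e, inner_sub_left, real_inner_smul_left] at h1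
    linarith
  have h2' : η * ⟪Ft, ss - u'⟫ ≤ η * ⟪Ft, cc - u'⟫ := by
    have e : (ss - u' : E) = (cc - u') - (cc - ss) := by abel
    rw [e, inner_sub_right]
    nlinarith [mul_nonneg hη.le h2]
  have h3' : ⟪u - cc, u' - cc⟫ - lam * ‖cc - pp‖ * ‖u' - cc‖ ≤ η * ⟪Ft, u' - cc⟫ := by
    have e : u - η • Fp - cc = (u - cc) - η • Fp := sub_right_comm _ _ _
    rw [e, inner_sub_left, real_inner_smul_left] at h3
    have hFp : ⟪Fp, u' - cc⟫ = ⟪Ft, u' - cc⟫ - ⟪Ft - Fp, u' - cc⟫ := by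
      rw [inner_sub_left]; ring
    have habs : |⟪Ft - Fp, u' - cc⟫| ≤ ‖Ft - Fp‖ * ‖u' - cc‖ := abs_real_inner_le_norm _ _
    have h4 : η * (-⟪Ft - Fp, u' - cc⟫) ≤ lam * ‖cc - pp‖ * ‖u' - cc‖ := by
      calc η * (-⟪Ft - Fp, u' - cc⟫) ≤ η * (‖Ft - Fp‖ * ‖u' - cc‖) := by
            apply mul_le_mul_of_nonneg_left _ hη.le
            have := neg_abs_le ⟪Ft - Fp, u' - cc⟫
            linarith [habs]
        _ = (η * ‖Ft - Fp‖) * ‖u' - cc‖ := by ring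
        _ ≤ (lam * ‖cc - pp‖) * ‖u' - cc‖ := mul_le_mul_of_nonneg_right hF (norm_nonneg _)
        _ = lam * ‖cc - pp‖ * ‖u' - cc‖ := by ring
    rw [hFp] at h3
    nlinarith [h3, h4]
  have einner : ⟪u - u', ss - u'⟫ = -⟪u - u', u' - ss⟫ := by
    rw [show (ss - u' : E) = -(u' - ss) from by abel, inner_neg_right]
  have einner2 : ⟪Ft, cc - u'⟫ = -⟪Ft, u' - cc⟫ := by
    rw [show (cc - u' : E) = -(u' - cc) from by abel, inner_neg_right]
  have main : ⟪u - u', ss - u'⟫ ≤ -⟪u - cc, u' - cc⟫ + lam * ‖cc - pp‖ * ‖u' - cc‖ := by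
    rw [einner2] at h2'
    linarith
  have I1 : ‖u - ss‖ ^ 2 = ‖u - u'‖ ^ 2 + 2 * ⟪u - u', u' - ss⟫ + ‖u' - ss‖ ^ 2 := by
    have h := norm_add_sq_real (u - u') (u' - ss)
    rw [show u - u' + (u' - ss) = u - ss from by abel] at h
    linarith
  have I2 : ‖u - u'‖ ^ 2 = ‖u - cc‖ ^ 2 - 2 * ⟪u - cc, u' - cc⟫ + ‖u' - cc‖ ^ 2 := by
    have h := norm_sub_sq_real (u - cc) (u' - cc)
    rw [show u - cc - (u' - cc) = u - u' from by abel] at h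
    linarith
  have I3 : ‖cc - pp‖ ≤ ‖u - cc‖ + ‖u - pp‖ := by
    calc ‖cc - pp‖ = ‖(cc - u) + (u - pp)‖ := by
          rw [show (cc - pp : E) = (cc - u) + (u - pp) from by abel]
      _ ≤ ‖cc - u‖ + ‖u - pp‖ := norm_add_le _ _
      _ = ‖u - cc‖ + ‖u - pp‖ := by rw [norm_sub_rev]
  -- scalar endgame
  set a := ‖u - cc‖ with ha
  set b := ‖u - pp‖ with hb
  set q := ‖u' - cc‖ with hqq
  have ha0 : 0 ≤ a := norm_nonneg _
  have hb0 : 0 ≤ b := norm_nonneg _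
  have hq0 : 0 ≤ q := norm_nonneg _
  have hstep : lam * ‖cc - pp‖ * q ≤ lam * (a + b) * q := by
    apply mul_le_mul_of_nonneg_right _ hq0
    exact mul_le_mul_of_nonneg_left I3 hlam0
  have hmain2 : ⟪u - u', ss - u'⟫ ≤ -⟪u - cc, u' - cc⟫ + lam * (a + b) * q :=
    le_trans main (by linarith)
  have hamgm : lam * (a + b) * q ≤ lam / 2 * (a ^ 2 + q ^ 2) + lam / 2 * (b ^ 2 + q ^ 2) := by
    nlinarith [mul_nonneg hlam0 (sq_nonneg (a - q)), mul_nonneg hlam0 (sq_nonneg (b - q))]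
  nlinarith [I1, I2, einner, hmain2, hamgm, sq_nonneg a, sq_nonneg b, sq_nonneg q,
    mul_nonneg hlam0 (sq_nonneg a), mul_nonneg hlam0 (sq_nonneg b), mul_nonneg hlam0 (sq_nonneg q)]

end SPRMAux
open SPRMAux in
set_option maxHeartbeats 3200000 in
/-- Duality-gap bounds for the SPRM⁺ iterates in terms of consecutive
distances. -/
theorem sprmp_gap_upperbounded_by_distance {d1 d2 : ℕ} (hd1 : 1 ≤ d1) (hd2 : 1 ≤ d2)
    (A : Matrix (Fin d1) (Fin d2) ℝ) (η : ℝ) (hη0 : 0 < η) (hη1 : η ≤ 1 / (8 * LF A))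
    (w z : ℕ → Joint d1 d2) (hS : SPRM A η w z) :
    (∀ t : ℕ, dualGap A (normPart (xPart (w (t + 1)))) (normPart (yPart (w (t + 1)))) ≤
      5 * (‖w t - z t‖ + ‖w (t + 1) - z t‖) / η) ∧
    (∀ t : ℕ, dualGap A (normPart (xPart (z t))) (normPart (yPart (z t))) ≤
      9 * (‖w t - z t‖ + ‖w t - zPrev w z t‖) / η) := by
  classical
  have hop : (0:ℝ) ≤ opNorm A := norm_nonneg _
  have hD1 : (1:ℝ) ≤ max (d1:ℝ) (d2:ℝ) :=
    le_trans (by exact_mod_cast hd1) (le_max_left _ _)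
  have hLF0 : 0 ≤ LF A :=
    mul_nonneg (mul_nonneg (Real.sqrt_nonneg _) hop) (by linarith)
  rcases eq_or_lt_of_le hLF0 with hLF | hLF
  · exfalso
    rw [← hLF] at hη1
    norm_num at hη1
    linarith
  have hη8 : 8 * LF A * η ≤ 1 := by
    have h8 : (0:ℝ) < 8 * LF A := by linarith
    calc 8 * LF A * η ≤ 8 * LF A * (1 / (8 * LF A)) :=
        mul_le_mul_of_nonneg_left hη1 h8.le
      _ = 1 := by field_simp
  obtain ⟨hw0, hz0, hzrec, hwrec⟩ := hS
  have hSne := ZgeSet_nonempty hd1 hd2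
  have hScl := ZgeSet_closed (d1 := d1) (d2 := d2)
  have hScx := ZgeSet_convex (d1 := d1) (d2 := d2)
  obtain ⟨xs, hxs, ys, hys, hN⟩ := nash_exists hd1 hd2 A
  set zs : Joint d1 d2 := joinPt xs ys with hzs
  have hzsZ : zs ∈ Zset d1 d2 := by
    constructor
    · rw [hzs, xPart_joinPt]; exact hxs
    · rw [hzs, yPart_joinPt]; exact hys
  have hzsge := Zset_subset_Zge hzsZ
  have hminty : ∀ z' ∈ ZgeSet d1 d2, 0 ≤ ⟪Fop A z', z' - zs⟫ := by
    intro z' hz'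
    rw [inner_Fop_sub_Zset A hz' hzsZ]
    have hkey := hN (normPart (xPart z')) (normPart_mem hz'.1)
      (normPart (yPart z')) (normPart_mem hz'.2)
    have e1 : yPart zs = ys := by rw [hzs, yPart_joinPt]
    have e2 : xPart zs = xs := by rw [hzs, xPart_joinPt]
    rw [e1, e2]
    linarith
  have hwmem : ∀ t, w t ∈ ZgeSet d1 d2 := by
    intro t
    cases t with
    | zero => exact Zset_subset_Zge hw0
    | succ n => rw [hwrec n]; exact (projOn_spec hSne hScl hScx _).1
  have hzprev_def : ∀ t, zPrev w z (t + 1) = z t := by intro t; simp [zPrev]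
  have hzprev_zero : zPrev w z 0 = w 0 := rfl
  have hzproj : ∀ t, z t = projOn (ZgeSet d1 d2) (w t - η • Fop A (zPrev w z t)) := by
    intro t
    cases t with
    | zero => rw [hzprev_zero]; exact hz0
    | succ n => rw [hzprev_def n]; exact hzrec n
  have hzmem : ∀ t, z t ∈ ZgeSet d1 d2 := by
    intro t; rw [hzproj t]; exact (projOn_spec hSne hScl hScx _).1
  have hzpmem : ∀ t, zPrev w z t ∈ ZgeSet d1 d2 := by
    intro t
    cases t with
    | zero => rw [hzprev_zero]; exact Zset_subset_Zge hw0
    | succ n => rw [hzprev_def n]; exact hzmem n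
  -- potential argument
  have hlam0 : 0 ≤ 2 * LF A * η := by positivity
  have hlam14 : 2 * LF A * η ≤ 1 / 4 := by linarith
  have hpot : ∀ t, ‖w (t + 1) - zs‖ ^ 2 + (1 / 2) * ‖w (t + 1) - zPrev w z (t + 1)‖ ^ 2 ≤
      ‖w t - zs‖ ^ 2 + (1 / 2) * ‖w t - zPrev w z t‖ ^ 2 := by
    intro t
    rw [hzprev_def t]
    have hFlip := Fop_lip hd1 hd2 A (hzmem t) (hzpmem t)
    apply popov_step η (2 * LF A * η) hη0 hlam0 hlam14 (w t) (w (t + 1)) (z t)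
      (zPrev w z t) zs (Fop A (z t)) (Fop A (zPrev w z t))
    · have h := projOn_inner_le hSne hScl hScx (w t - η • Fop A (z t)) hzsge
      rw [← hwrec t] at h
      exact h
    · exact hminty (z t) (hzmem t)
    · have h := projOn_inner_le hSne hScl hScx (w t - η • Fop A (zPrev w z t)) (hwmem (t + 1))
      rw [← hzproj t] at h
      exact h
    · calc η * ‖Fop A (z t) - Fop A (zPrev w z t)‖
          ≤ η * (2 * LF A * ‖z t - zPrev w z t‖) := mul_le_mul_of_nonneg_left hFlip hη0.le
        _ = 2 * LF A * η * ‖z t - zPrev w z t‖ := by ring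
  have hbound : ∀ t, ‖w t - zs‖ ^ 2 + (1 / 2) * ‖w t - zPrev w z t‖ ^ 2 ≤ 4 := by
    intro t
    induction t with
    | zero =>
        rw [hzprev_zero, sub_self, norm_zero]
        have := Zset_norm_sub_le hw0 hzsZ
        nlinarith [norm_nonneg (w 0 - zs)]
    | succ n ih => exact le_trans (hpot n) ih
  have hwzs : ∀ t, ‖w t - zs‖ ≤ 2 := by
    intro t
    have h := hbound t
    nlinarith [norm_nonneg (w t - zs), sq_nonneg (‖w t - zPrev w z t‖)]
  -- ‖z t - w t‖ ≤ 1
  have h6 : (2:ℝ) ≤ Real.sqrt 6 := by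
    have h4 : (2:ℝ) = Real.sqrt 4 := by
      rw [show (4:ℝ) = 2 ^ 2 by norm_num, Real.sqrt_sq (by norm_num : (0:ℝ) ≤ 2)]
    rw [h4]
    exact Real.sqrt_le_sqrt (by norm_num)
  have hsqrt_le : ∀ m : ℕ, 1 ≤ m → Real.sqrt m ≤ max (d1:ℝ) (d2:ℝ) → True := fun _ _ _ => trivial
  have hsd1 : Real.sqrt d1 ≤ max (d1:ℝ) (d2:ℝ) := by
    have h1 : (1:ℝ) ≤ (d1:ℝ) := by exact_mod_cast hd1
    have : Real.sqrt d1 ≤ Real.sqrt ((d1:ℝ) ^ 2) := Real.sqrt_le_sqrt (by nlinarith)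
    rw [Real.sqrt_sq (by linarith)] at this
    exact le_trans this (le_max_left _ _)
  have hsd2 : Real.sqrt d2 ≤ max (d1:ℝ) (d2:ℝ) := by
    have h1 : (1:ℝ) ≤ (d2:ℝ) := by exact_mod_cast hd2
    have : Real.sqrt d2 ≤ Real.sqrt ((d2:ℝ) ^ 2) := Real.sqrt_le_sqrt (by nlinarith)
    rw [Real.sqrt_sq (by linarith)] at this
    exact le_trans this (le_max_right _ _)
  have hσD : η * (opNorm A * (2 + Real.sqrt d1 + Real.sqrt d2)) ≤ 1 / 2 := by
    set D : ℝ := max (d1:ℝ) (d2:ℝ) with hD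
    have hLFval : LF A = Real.sqrt 6 * opNorm A * D := rfl
    -- 8 * √6 * σ * D * η ≤ 1 and √6 ≥ 2 ⟹ 16 σ D η ≤ 1
    have h16 : 16 * (opNorm A * D) * η ≤ 1 := by
      have hσDη : 0 ≤ opNorm A * D * η := by positivity
      nlinarith [hη8, hLFval, mul_le_mul_of_nonneg_right
        (mul_le_mul_of_nonneg_right (mul_le_mul_of_nonneg_left h6 (by norm_num : (0:ℝ) ≤ 8)) hop)
        (mul_nonneg (by linarith : (0:ℝ) ≤ D) hη0.le)]
    have hcoef : opNorm A * (2 + Real.sqrt d1 + Real.sqrt d2) ≤ opNorm A * (4 * D) := by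
      apply mul_le_mul_of_nonneg_left _ hop
      linarith
    calc η * (opNorm A * (2 + Real.sqrt d1 + Real.sqrt d2)) ≤ η * (opNorm A * (4 * D)) :=
        mul_le_mul_of_nonneg_left hcoef hη0.le
      _ = (4 * (opNorm A * D)) * η := by ring
      _ ≤ 1 / 2 := by nlinarith [h16, mul_nonneg (mul_nonneg hop (by linarith : (0:ℝ) ≤ D)) hη0.le]
  have hzw : ∀ t, ‖z t - w t‖ ≤ 1 := by
    intro t
    rw [hzproj t]
    have hd := projOn_dist_le hSne hScl hScx (w t - η • Fop A (zPrev w z t)) (hwmem t)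
    have he : ‖(w t - η • Fop A (zPrev w z t)) - w t‖ = η * ‖Fop A (zPrev w z t)‖ := by
      rw [show (w t - η • Fop A (zPrev w z t)) - w t = -(η • Fop A (zPrev w z t)) from by abel,
        norm_neg, norm_smul, Real.norm_eq_abs, abs_of_pos hη0]
    have hFn := norm_Fop_le A (hzpmem t)
    calc ‖projOn (ZgeSet d1 d2) (w t - η • Fop A (zPrev w z t)) - w t‖
        ≤ 2 * ‖(w t - η • Fop A (zPrev w z t)) - w t‖ := hd
      _ = 2 * (η * ‖Fop A (zPrev w z t)‖) := by rw [he]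
      _ ≤ 2 * (η * (opNorm A * (2 + Real.sqrt d1 + Real.sqrt d2))) := by
          apply mul_le_mul_of_nonneg_left _ (by norm_num : (0:ℝ) ≤ 2)
          exact mul_le_mul_of_nonneg_left hFn hη0.le
      _ ≤ 1 := by linarith
  constructor
  · -- claim (1)
    intro t
    apply dualGap_le hd1 hd2
    intro x' hx' y' hy'
    set zh : Joint d1 d2 := joinPt x' y' with hzh
    have hzhZ : zh ∈ Zset d1 d2 := by
      constructor
      · rw [hzh, xPart_joinPt]; exact hx'
      · rw [hzh, yPart_joinPt]; exact hy'
    have heq : payoff A (normPart (xPart (w (t + 1)))) y' -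
        payoff A x' (normPart (yPart (w (t + 1)))) = ⟪Fop A (w (t + 1)), w (t + 1) - zh⟫ := by
      rw [inner_Fop_sub_Zset A (hwmem (t + 1)) hzhZ, hzh, xPart_joinPt, yPart_joinPt]
    rw [heq, le_div_iff₀ hη0]
    have hsplit : ⟪Fop A (w (t + 1)), w (t + 1) - zh⟫ =
        ⟪Fop A (z t), w (t + 1) - zh⟫ +
        ⟪Fop A (w (t + 1)) - Fop A (z t), w (t + 1) - zh⟫ := by
      rw [inner_sub_left]; ring
    have hproj := projOn_inner_le hSne hScl hScx (w t - η • Fop A (z t)) (Zset_subset_Zge hzhZ)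
    rw [← hwrec t] at hproj
    have hproj' : η * ⟪Fop A (z t), w (t + 1) - zh⟫ ≤ ⟪w t - w (t + 1), w (t + 1) - zh⟫ := by
      have e : w t - η • Fop A (z t) - w (t + 1) = (w t - w (t + 1)) - η • Fop A (z t) :=
        sub_right_comm _ _ _
      rw [e, inner_sub_left, real_inner_smul_left] at hproj
      have e2 : ⟪w t - w (t + 1), zh - w (t + 1)⟫ = -⟪w t - w (t + 1), w (t + 1) - zh⟫ := by
        rw [show zh - w (t + 1) = -(w (t + 1) - zh) from by abel, inner_neg_right]
      have e3 : ⟪Fop A (z t), zh - w (t + 1)⟫ = -⟪Fop A (z t), w (t + 1) - zh⟫ := by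
        rw [show zh - w (t + 1) = -(w (t + 1) - zh) from by abel, inner_neg_right]
      rw [e2, e3] at hproj
      linarith
    have hDz : ‖w (t + 1) - zh‖ ≤ 4 := by
      calc ‖w (t + 1) - zh‖ = ‖(w (t + 1) - zs) + (zs - zh)‖ := by
            rw [show w (t + 1) - zh = (w (t + 1) - zs) + (zs - zh) from by abel]
        _ ≤ ‖w (t + 1) - zs‖ + ‖zs - zh‖ := norm_add_le _ _
        _ ≤ 2 + 2 := add_le_add (hwzs (t + 1)) (Zset_norm_sub_le hzsZ hzhZ)
        _ = 4 := by norm_num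
    have hCS1 : ⟪w t - w (t + 1), w (t + 1) - zh⟫ ≤ ‖w t - w (t + 1)‖ * 4 := by
      calc ⟪w t - w (t + 1), w (t + 1) - zh⟫ ≤ ‖w t - w (t + 1)‖ * ‖w (t + 1) - zh‖ :=
          real_inner_le_norm _ _
        _ ≤ ‖w t - w (t + 1)‖ * 4 := mul_le_mul_of_nonneg_left hDz (norm_nonneg _)
    have hLip := Fop_lip hd1 hd2 A (hwmem (t + 1)) (hzmem t)
    have hCS2 : ⟪Fop A (w (t + 1)) - Fop A (z t), w (t + 1) - zh⟫ ≤
        2 * LF A * ‖w (t + 1) - z t‖ * 4 := by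
      calc ⟪Fop A (w (t + 1)) - Fop A (z t), w (t + 1) - zh⟫
          ≤ ‖Fop A (w (t + 1)) - Fop A (z t)‖ * ‖w (t + 1) - zh‖ := real_inner_le_norm _ _
        _ ≤ (2 * LF A * ‖w (t + 1) - z t‖) * 4 := by
            apply mul_le_mul hLip hDz (norm_nonneg _)
            positivity
    have htri : ‖w t - w (t + 1)‖ ≤ ‖w t - z t‖ + ‖w (t + 1) - z t‖ := by
      calc ‖w t - w (t + 1)‖ = ‖(w t - z t) + (z t - w (t + 1))‖ := by
            rw [show w t - w (t + 1) = (w t - z t) + (z t - w (t + 1)) from by abel]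
        _ ≤ ‖w t - z t‖ + ‖z t - w (t + 1)‖ := norm_add_le _ _
        _ = ‖w t - z t‖ + ‖w (t + 1) - z t‖ := by rw [norm_sub_rev (z t)]
    set a := ‖w t - z t‖ with haa
    set b := ‖w (t + 1) - z t‖ with hbb
    have ha0 : 0 ≤ a := norm_nonneg _
    have hb0 : 0 ≤ b := norm_nonneg _
    have hterm1 : η * ⟪Fop A (z t), w (t + 1) - zh⟫ ≤ (a + b) * 4 := by
      refine le_trans hproj' (le_trans hCS1 ?_)
      have := mul_le_mul_of_nonneg_right htri (by norm_num : (0:ℝ) ≤ 4)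
      linarith
    have hterm2 : η * ⟪Fop A (w (t + 1)) - Fop A (z t), w (t + 1) - zh⟫ ≤ b := by
      calc η * ⟪Fop A (w (t + 1)) - Fop A (z t), w (t + 1) - zh⟫
          ≤ η * (2 * LF A * b * 4) := mul_le_mul_of_nonneg_left hCS2 hη0.le
        _ = (8 * LF A * η) * b := by ring
        _ ≤ 1 * b := mul_le_mul_of_nonneg_right hη8 hb0
        _ = b := one_mul b
    rw [hsplit]
    calc (⟪Fop A (z t), w (t + 1) - zh⟫ +
          ⟪Fop A (w (t + 1)) - Fop A (z t), w (t + 1) - zh⟫) * η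
        = η * ⟪Fop A (z t), w (t + 1) - zh⟫ +
          η * ⟪Fop A (w (t + 1)) - Fop A (z t), w (t + 1) - zh⟫ := by ring
      _ ≤ (a + b) * 4 + b := add_le_add hterm1 hterm2
      _ ≤ 5 * (a + b) := by linarith
  · -- claim (2)
    intro t
    apply dualGap_le hd1 hd2
    intro x' hx' y' hy'
    set zh : Joint d1 d2 := joinPt x' y' with hzh
    have hzhZ : zh ∈ Zset d1 d2 := by
      constructor
      · rw [hzh, xPart_joinPt]; exact hx'
      · rw [hzh, yPart_joinPt]; exact hy'
    have heq : payoff A (normPart (xPart (z t))) y' -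
        payoff A x' (normPart (yPart (z t))) = ⟪Fop A (z t), z t - zh⟫ := by
      rw [inner_Fop_sub_Zset A (hzmem t) hzhZ, hzh, xPart_joinPt, yPart_joinPt]
    rw [heq, le_div_iff₀ hη0]
    have hsplit : ⟪Fop A (z t), z t - zh⟫ =
        ⟪Fop A (zPrev w z t), z t - zh⟫ +
        ⟪Fop A (z t) - Fop A (zPrev w z t), z t - zh⟫ := by
      rw [inner_sub_left]; ring
    have hproj := projOn_inner_le hSne hScl hScx
      (w t - η • Fop A (zPrev w z t)) (Zset_subset_Zge hzhZ)
    rw [← hzproj t] at hproj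
    have hproj' : η * ⟪Fop A (zPrev w z t), z t - zh⟫ ≤ ⟪w t - z t, z t - zh⟫ := by
      have e : w t - η • Fop A (zPrev w z t) - z t = (w t - z t) - η • Fop A (zPrev w z t) :=
        sub_right_comm _ _ _
      rw [e, inner_sub_left, real_inner_smul_left] at hproj
      have e2 : ⟪w t - z t, zh - z t⟫ = -⟪w t - z t, z t - zh⟫ := by
        rw [show zh - z t = -(z t - zh) from by abel, inner_neg_right]
      have e3 : ⟪Fop A (zPrev w z t), zh - z t⟫ = -⟪Fop A (zPrev w z t), z t - zh⟫ := by
        rw [show zh - z t = -(z t - zh) from by abel, inner_neg_right]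
      rw [e2, e3] at hproj
      linarith
    have hDz : ‖z t - zh‖ ≤ 5 := by
      calc ‖z t - zh‖ = ‖(z t - w t) + (w t - zs) + (zs - zh)‖ := by
            rw [show z t - zh = (z t - w t) + (w t - zs) + (zs - zh) from by abel]
        _ ≤ ‖(z t - w t) + (w t - zs)‖ + ‖zs - zh‖ := norm_add_le _ _
        _ ≤ ‖z t - w t‖ + ‖w t - zs‖ + ‖zs - zh‖ := by
            have := norm_add_le (z t - w t) (w t - zs)
            linarith
        _ ≤ 1 + 2 + 2 := by
            have h1 := hzw t
            have h2 := hwzs t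
            have h3 := Zset_norm_sub_le hzsZ hzhZ
            linarith
        _ = 5 := by norm_num
    have hCS1 : ⟪w t - z t, z t - zh⟫ ≤ ‖w t - z t‖ * 5 := by
      calc ⟪w t - z t, z t - zh⟫ ≤ ‖w t - z t‖ * ‖z t - zh‖ := real_inner_le_norm _ _
        _ ≤ ‖w t - z t‖ * 5 := mul_le_mul_of_nonneg_left hDz (norm_nonneg _)
    have hLip := Fop_lip hd1 hd2 A (hzmem t) (hzpmem t)
    have hCS2 : ⟪Fop A (z t) - Fop A (zPrev w z t), z t - zh⟫ ≤
        2 * LF A * ‖z t - zPrev w z t‖ * 5 := by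
      calc ⟪Fop A (z t) - Fop A (zPrev w z t), z t - zh⟫
          ≤ ‖Fop A (z t) - Fop A (zPrev w z t)‖ * ‖z t - zh‖ := real_inner_le_norm _ _
        _ ≤ (2 * LF A * ‖z t - zPrev w z t‖) * 5 := by
            apply mul_le_mul hLip hDz (norm_nonneg _)
            positivity
    set a := ‖w t - z t‖ with haa
    set c := ‖w t - zPrev w z t‖ with hcc
    have ha0 : 0 ≤ a := norm_nonneg _
    have hc0 : 0 ≤ c := norm_nonneg _
    have htri : ‖z t - zPrev w z t‖ ≤ a + c := by
      calc ‖z t - zPrev w z t‖ = ‖(z t - w t) + (w t - zPrev w z t)‖ := by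
            rw [show z t - zPrev w z t = (z t - w t) + (w t - zPrev w z t) from by abel]
        _ ≤ ‖z t - w t‖ + ‖w t - zPrev w z t‖ := norm_add_le _ _
        _ = a + c := by rw [norm_sub_rev (z t)]
    have hterm1 : η * ⟪Fop A (zPrev w z t), z t - zh⟫ ≤ a * 5 :=
      le_trans hproj' hCS1
    have hterm2 : η * ⟪Fop A (z t) - Fop A (zPrev w z t), z t - zh⟫ ≤ 2 * (a + c) := by
      calc η * ⟪Fop A (z t) - Fop A (zPrev w z t), z t - zh⟫
          ≤ η * (2 * LF A * ‖z t - zPrev w z t‖ * 5) := mul_le_mul_of_nonneg_left hCS2 hη0.le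
        _ = (8 * LF A * η) * (5 / 4 * ‖z t - zPrev w z t‖) := by ring
        _ ≤ 1 * (5 / 4 * ‖z t - zPrev w z t‖) := by
            apply mul_le_mul_of_nonneg_right hη8
            positivity
        _ = 5 / 4 * ‖z t - zPrev w z t‖ := one_mul _
        _ ≤ 2 * (a + c) := by
            have := htri
            nlinarith [norm_nonneg (z t - zPrev w z t)]
    rw [hsplit]
    calc (⟪Fop A (zPrev w z t), z t - zh⟫ +
          ⟪Fop A (z t) - Fop A (zPrev w z t), z t - zh⟫) * η
        = η * ⟪Fop A (zPrev w z t), z t - zh⟫ +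
          η * ⟪Fop A (z t) - Fop A (zPrev w z t), z t - zh⟫ := by ring
      _ ≤ a * 5 + 2 * (a + c) := add_le_add hterm1 hterm2
      _ ≤ 9 * (a + c) := by linarith

end
end

section
/- Let η > 0, let z ∈ Z, and let z1, z2, z3 ∈ Z_≥ satisfy z3 = Π_{Z_≥}(z1 − η·F(z2)). Writing (x3, y3) = g(z3), it holds that DualGap(x3, y3) ≤ (‖z1 − z3‖ + η·L_F·‖z3 − z2‖)·(‖z3 − z‖ + 2) / η. -/
open scoped BigOperators RealInnerProductSpace
open Filter Topology

noncomputable section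

/- ===================== auxiliary development ===================== -/

private lemma scalarB (D t q H p : ℝ) (hd1 : 1 ≤ D)
    (cs1 : (D*q - t)^2 ≤ (D*p - 1)*(D*H - t^2)) (cs2 : t^2 ≤ D*H)
    (hp1 : p ≤ 1) : H - 2*q*t + D*q^2 ≤ D*H := by
  have hD0 : (0:ℝ) < D := by linarith
  have hH2n : (0:ℝ) ≤ D*H - t^2 := by linarith
  have h6 : (D*q - t)^2 ≤ (D-1)*(D*H - t^2) := by nlinarith [mul_nonneg (sub_nonneg.2 hp1) hH2n]
  have final : D*(H - 2*q*t + D*q^2) ≤ D*(D*H) := by nlinarith [h6, mul_nonneg hD0.le (sq_nonneg t)]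
  exact le_of_mul_le_mul_left final hD0

private lemma scalarA (D t q H p : ℝ) (hd1 : 1 ≤ D)
    (cs1 : (D*q - t)^2 ≤ (D*p - 1)*(D*H - t^2)) (cs2 : t^2 ≤ D*H)
    (hp1 : p ≤ 1) (hpd : 1 ≤ D*p) : H - 2*t*q + t^2*p ≤ D*H := by
  have hD0 : (0:ℝ) < D := by linarith
  set H2 : ℝ := D*H - t^2 with hH2
  set P2 : ℝ := D*p - 1 with hP2
  set Q2 : ℝ := D*q - t with hQ2
  have hH2n : (0:ℝ) ≤ H2 := by rw [hH2]; linarith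
  have hP2n : (0:ℝ) ≤ P2 := by rw [hP2]; linarith
  have hP2top : P2 ≤ D - 1 := by rw [hP2]; nlinarith
  have goal' : H2 - 2*t*Q2 + t^2*P2 ≤ D*H2 + D*t^2 := by
    clear_value H2 P2 Q2
    clear hH2 hP2 hQ2
    rcases eq_or_lt_of_le hP2n with hP20 | hP2pos
    · have hQ20 : Q2 = 0 := by nlinarith [cs1]
      rw [hQ20, ← hP20]
      nlinarith [hH2n, sq_nonneg t]
    · have hD1 : 1 < D := by nlinarith
      have hfact : (0:ℝ) ≤ P2*t^2*((D-1)*(D-P2) - P2) := by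
        have h0 : (0:ℝ) ≤ (D-1)*(D-P2) - P2 := by nlinarith
        positivity
      have hGmul : 0 ≤ (D-1)*P2*((D*H2 + D*t^2) - (H2 - 2*t*Q2 + t^2*P2)) := by
        nlinarith [sq_nonneg ((D-1)*Q2 + P2*t), hfact,
          mul_le_mul_of_nonneg_left cs1 (sq_nonneg (D-1)), sq_nonneg (D-1)]
      nlinarith [hGmul, mul_pos (by linarith : (0:ℝ) < D - 1) hP2pos]
  rw [hH2, hP2, hQ2] at goal'
  nlinarith [goal', cs2]

section sums
variable {d : ℕ}

private lemma lin4 (f1 f2 f3 : Fin d → ℝ) (a b c e : ℝ) :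
    ∑ i, (a * f1 i + b * f2 i + c * f3 i + e) =
      a * (∑ i, f1 i) + b * (∑ i, f2 i) + c * (∑ i, f3 i) + e * (d:ℝ) := by
  simp [Finset.sum_add_distrib, ← Finset.mul_sum, Finset.sum_const, Finset.card_univ,
    nsmul_eq_mul]
  ring

private lemma csq (f g : Fin d → ℝ) :
    (∑ i, f i * g i)^2 ≤ (∑ i, f i^2) * (∑ i, g i^2) :=
  Finset.sum_mul_sq_le_sq_mul_sq Finset.univ f g

private lemma sums_facts (w h : Fin d → ℝ) (hw0 : ∀ i, 0 ≤ w i) (hw1 : ∑ i, w i = 1) :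
    ((d:ℝ)*(∑ j, w j * h j) - (∑ i, h i))^2 ≤
      ((d:ℝ)*(∑ i, (w i)^2) - 1)*((d:ℝ)*(∑ i, (h i)^2) - (∑ i, h i)^2) ∧
    (∑ i, h i)^2 ≤ (d:ℝ) * (∑ i, (h i)^2) ∧
    (∑ i, (w i)^2) ≤ 1 ∧ (1:ℝ) ≤ (d:ℝ) * (∑ i, (w i)^2) ∧ (1:ℝ) ≤ (d:ℝ) := by
  have hd0 : d ≠ 0 := by rintro rfl; simp at hw1
  set D : ℝ := (d:ℝ) with hD
  have hD0 : (0:ℝ) < D := by rw [hD]; exact_mod_cast Nat.pos_of_ne_zero hd0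
  have hd1 : (1:ℝ) ≤ D := by rw [hD]; exact_mod_cast Nat.one_le_iff_ne_zero.2 hd0
  have esq_w : ∑ i, w i * w i = ∑ i, (w i)^2 := Finset.sum_congr rfl fun i _ => (sq (w i)).symm
  have esq_h : ∑ i, h i * h i = ∑ i, (h i)^2 := Finset.sum_congr rfl fun i _ => (sq (h i)).symm
  refine ⟨?_, ?_, ?_, ?_, hd1⟩
  · have e1 : ∑ i, ((D * w i - 1) * (D * h i - (∑ k, h k)))
        = D * (D*(∑ j, w j * h j) - (∑ i, h i)) := by
      have h1 : ∀ i : Fin d, (D * w i - 1) * (D * h i - (∑ k, h k))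
          = (D^2) * (w i * h i) + (-(D*(∑ k, h k))) * (w i) + (-D) * (h i) + (∑ k, h k) :=
        fun i => by ring
      rw [Finset.sum_congr rfl fun i _ => h1 i, lin4, hw1]; ring
    have e2 : ∑ i, ((D * w i - 1))^2 = D * (D*(∑ i, (w i)^2) - 1) := by
      have h1 : ∀ i : Fin d, (D * w i - 1)^2
          = (D^2) * (w i * w i) + (-(2*D)) * (w i) + 0 * (h i) + 1 := fun i => by ring
      rw [Finset.sum_congr rfl fun i _ => h1 i, lin4, esq_w, hw1]; ring
    have e3 : ∑ i, ((D * h i - (∑ k, h k)))^2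
        = D * (D*(∑ i, (h i)^2) - (∑ k, h k)^2) := by
      have h1 : ∀ i : Fin d, (D * h i - (∑ k, h k))^2
          = (D^2) * (h i * h i) + 0 * (w i) + (-(2*D*(∑ k, h k))) * (h i) + (∑ k, h k)^2 :=
        fun i => by ring
      rw [Finset.sum_congr rfl fun i _ => h1 i, lin4, esq_h]; ring
    have key := csq (fun i => D * w i - 1) (fun i => D * h i - (∑ k, h k))
    rw [e1, e2, e3] at key
    have key2 : D^2 * (D*(∑ j, w j * h j) - (∑ i, h i))^2
        ≤ D^2 * ((D*(∑ i, (w i)^2) - 1)*(D*(∑ i, (h i)^2) - (∑ i, h i)^2)) := by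
      nlinarith [key]
    exact le_of_mul_le_mul_left key2 (by positivity)
  · have key := csq (fun _ : Fin d => (1:ℝ)) h
    simpa [Finset.card_univ, ← hD] using key
  · have := Finset.sum_sq_le_sq_sum_of_nonneg (s := Finset.univ) (f := w) (fun i _ => hw0 i)
    rw [hw1] at this; simpa using this
  · have key := csq w (fun _ : Fin d => (1:ℝ))
    simp only [mul_one, one_pow] at key
    rw [hw1] at key
    simpa [Finset.card_univ, ← hD, mul_comm] using key

private lemma lemB_sum (w h : Fin d → ℝ) (hw0 : ∀ i, 0 ≤ w i) (hw1 : ∑ i, w i = 1) :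
    ∑ i, (h i - (∑ j, w j * h j))^2 ≤ (d:ℝ) * ∑ i, (h i)^2 := by
  obtain ⟨cs1, cs2, hp1, hpd, hd1⟩ := sums_facts w h hw0 hw1
  have expand : ∑ i, (h i - (∑ j, w j * h j))^2
      = (∑ i, (h i)^2) - 2*(∑ j, w j * h j)*(∑ i, h i) + (d:ℝ)*(∑ j, w j * h j)^2 := by
    have h1 : ∀ i : Fin d, (h i - (∑ j, w j * h j))^2
        = 1 * (h i * h i) + 0 * (w i) + (-(2*(∑ j, w j * h j))) * (h i) + (∑ j, w j * h j)^2 :=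
      fun i => by ring
    rw [Finset.sum_congr rfl fun i _ => h1 i, lin4,
      Finset.sum_congr rfl fun (i : Fin d) _ => (sq (h i)).symm]
    ring
  rw [expand]
  exact scalarB _ _ _ _ _ hd1 cs1 cs2 hp1

private lemma lemA_sum (w h : Fin d → ℝ) (hw0 : ∀ i, 0 ≤ w i) (hw1 : ∑ i, w i = 1) :
    ∑ i, (h i - (∑ j, h j) * w i)^2 ≤ (d:ℝ) * ∑ i, (h i)^2 := by
  obtain ⟨cs1, cs2, hp1, hpd, hd1⟩ := sums_facts w h hw0 hw1
  have expand : ∑ i, (h i - (∑ j, h j) * w i)^2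
      = (∑ i, (h i)^2) - 2*(∑ j, h j)*(∑ j, w j * h j) + (∑ j, h j)^2*(∑ i, (w i)^2) := by
    have h1 : ∀ i : Fin d, (h i - (∑ j, h j) * w i)^2
        = (∑ j, h j)^2 * (w i * w i) + 1 * (h i * h i) + (-(2*(∑ j, h j))) * (w i * h i) + 0 :=
      fun i => by ring
    rw [Finset.sum_congr rfl fun i _ => h1 i]
    rw [show ∀ (f1 f2 f3 : Fin d → ℝ) (a b c : ℝ),
      ∑ i, (a * f1 i + b * f2 i + c * f3 i + 0)
        = a * (∑ i, f1 i) + b * (∑ i, f2 i) + c * (∑ i, f3 i) + 0 * (d:ℝ)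
      from fun f1 f2 f3 a b c => by rw [lin4]]
    rw [Finset.sum_congr rfl fun (i : Fin d) _ => (sq (w i)).symm,
      Finset.sum_congr rfl fun (i : Fin d) _ => (sq (h i)).symm]
    ring
  rw [expand]
  exact scalarA _ _ _ _ _ hd1 cs1 cs2 hp1 hpd
end sums

section vec
variable {d d1 d2 : ℕ}

/-- Pin a function as a Euclidean vector. -/
private def vmk {d : ℕ} (f : Fin d → ℝ) : Vec d := WithLp.toLp 2 f

@[simp] private lemma vmk_apply (f : Fin d → ℝ) (i : Fin d) : vmk f i = f i := rfl

private lemma rinner_eq' {ι : Type*} [Fintype ι] (a b : EuclideanSpace ℝ ι) :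
    ⟪a, b⟫ = ∑ i, a i * b i := by
  simp [PiLp.inner_apply, RCLike.inner_apply, conj_trivial, mul_comm]

private lemma vnorm_sq' {ι : Type*} [Fintype ι] (a : EuclideanSpace ℝ ι) :
    ‖a‖^2 = ∑ i, (a i)^2 := by
  rw [← real_inner_self_eq_norm_sq, rinner_eq']
  simp [sq]

private lemma rinner_eq (a b : Vec d) : ⟪a, b⟫ = ∑ i, a i * b i := rinner_eq' a b
private lemma vnorm_sq (a : Vec d) : ‖a‖^2 = ∑ i, (a i)^2 := vnorm_sq' a

private lemma vnorm_eq (a : Vec d) : ‖a‖ = Real.sqrt (∑ i, (a i)^2) := by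
  rw [EuclideanSpace.norm_eq]
  congr 1
  exact Finset.sum_congr rfl fun i _ => (sq_abs (a i))

private lemma sqrt_mul_le {x y c : ℝ} (hx : 0 ≤ x) (hy : 0 ≤ y) (hc : 0 ≤ c)
    (h : x^2 ≤ c * y^2) : x ≤ Real.sqrt c * y := by
  have := Real.sqrt_le_sqrt h
  rwa [Real.sqrt_sq hx, Real.sqrt_mul hc, Real.sqrt_sq hy] at this

private lemma const_norm (c : ℝ) : ‖vmk (fun _ : Fin d => c)‖ = Real.sqrt d * |c| := by
  rw [vnorm_eq]
  simp [Finset.sum_const, Finset.card_univ, nsmul_eq_mul,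
    Real.sqrt_mul (by positivity : (0:ℝ) ≤ (d:ℝ)), Real.sqrt_sq_eq_abs]

private lemma joint_norm_sq (z : Joint d1 d2) : ‖z‖^2 = ‖xPart z‖^2 + ‖yPart z‖^2 := by
  rw [vnorm_sq' z, vnorm_sq, vnorm_sq]
  exact Fintype.sum_sum_type (fun s => (z s)^2)

private lemma joint_inner (a b : Joint d1 d2) :
    ⟪a, b⟫ = (∑ i, a (Sum.inl i) * b (Sum.inl i)) + ∑ j, a (Sum.inr j) * b (Sum.inr j) := by
  rw [rinner_eq' a b]
  exact Fintype.sum_sum_type (fun s => a s * b s)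

private lemma xPart_sub (a b : Joint d1 d2) : xPart (a - b) = xPart a - xPart b := rfl
private lemma yPart_sub (a b : Joint d1 d2) : yPart (a - b) = yPart a - yPart b := rfl

-- simplex facts
private lemma simplex_norm_sq_le {w : Vec d} (hw : w ∈ simplexSet d) : ‖w‖^2 ≤ 1 := by
  obtain ⟨h0, h1⟩ := hw
  rw [vnorm_sq]
  have := Finset.sum_sq_le_sq_sum_of_nonneg (s := Finset.univ) (f := fun i => w i)
    (fun i _ => h0 i)
  rw [h1] at this; simpa using this

private lemma simplex_norm_le {w : Vec d} (hw : w ∈ simplexSet d) : ‖w‖ ≤ 1 := by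
  have := simplex_norm_sq_le hw
  nlinarith [norm_nonneg w]

private lemma clipped_sum_pos {u : Vec d} (hu : u ∈ clippedSet d) : 0 < ∑ i, u i :=
  lt_of_lt_of_le one_pos hu.2

private lemma normPart_apply {u : Vec d} (hu : u ∈ clippedSet d) (i : Fin d) :
    normPart u i = (∑ k, u k)⁻¹ * u i := by
  have habs : ∑ i, |u i| = ∑ i, u i :=
    Finset.sum_congr rfl fun i _ => abs_of_nonneg (hu.1 i)
  rw [normPart, habs]; rfl

private lemma normPart_mem {u : Vec d} (hu : u ∈ clippedSet d) :
    normPart u ∈ simplexSet d := by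
  have hs := clipped_sum_pos hu
  constructor
  · intro i
    rw [normPart_apply hu]
    exact mul_nonneg (inv_nonneg.2 hs.le) (hu.1 i)
  · rw [Finset.sum_congr rfl fun i _ => normPart_apply hu i, ← Finset.mul_sum]
    field_simp

private lemma smul_normPart {u : Vec d} (hu : u ∈ clippedSet d) (i : Fin d) :
    u i = (∑ k, u k) * normPart u i := by
  rw [normPart_apply hu]
  field_simp [(clipped_sum_pos hu).ne']

-- Lipschitzness of the normalization (squared form)
private lemma gLip {u u' : Vec d} (hu : u ∈ clippedSet d) (hu' : u' ∈ clippedSet d) :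
    ‖normPart u - normPart u'‖^2 ≤ (d:ℝ) * ‖u - u'‖^2 := by
  have hs := clipped_sum_pos hu
  have hs' := clipped_sum_pos hu'
  have key : ∀ i, normPart u i - normPart u' i
      = (∑ k, u k)⁻¹ * (((u - u') i) - (∑ j, (u - u') j) * normPart u' i) := by
    intro i
    have e : ∑ j, (u - u') j = (∑ k, u k) - (∑ k, u' k) := by
      rw [Finset.sum_congr rfl fun j _ => (show (u - u') j = u j - u' j from rfl),
        Finset.sum_sub_distrib]
    rw [normPart_apply hu, normPart_apply hu', e,
      show (u - u') i = u i - u' i from rfl]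
    field_simp
    ring
  have e2 : ∑ i, ((normPart u - normPart u') i)^2
      = (∑ k, u k)⁻¹^2 * ∑ i, (((u - u') i) - (∑ j, (u - u') j) * normPart u' i)^2 := by
    rw [Finset.mul_sum]
    refine Finset.sum_congr rfl fun i _ => ?_
    rw [show (normPart u - normPart u') i = normPart u i - normPart u' i from rfl, key i]
    ring
  rw [vnorm_sq, vnorm_sq, e2]
  have hw' := normPart_mem hu'
  have hls : (∑ k, u k)⁻¹^2 ≤ 1 := by
    have h1 : 1 ≤ ∑ k, u k := hu.2
    rw [show ((∑ k, u k)⁻¹)^2 = ((∑ k, u k)^2)⁻¹ by rw [sq, sq, mul_inv]]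
    rw [inv_le_one_iff₀]
    right; nlinarith
  have core := lemA_sum (fun i => normPart u' i) (fun i => (u - u') i) hw'.1 hw'.2
  calc (∑ k, u k)⁻¹^2 * ∑ i, (((u - u') i) - (∑ j, (u - u') j) * normPart u' i)^2
      ≤ 1 * ∑ i, (((u - u') i) - (∑ j, (u - u') j) * normPart u' i)^2 :=
        mul_le_mul_of_nonneg_right hls (by positivity)
    _ = ∑ i, (((u - u') i) - (∑ j, (u - u') j) * normPart u' i)^2 := one_mul _
    _ ≤ (d:ℝ) * ∑ i, ((u - u') i)^2 := core

-- matrix action bounds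
private lemma Amul_eq (A : Matrix (Fin d1) (Fin d2) ℝ) (y : Vec d2) :
    (Matrix.toEuclideanLin A) y = vmk (fun i => ∑ j, A i j * y j) := by
  ext i
  simp [Matrix.toEuclideanLin_apply, Matrix.mulVec, dotProduct, vmk]

private lemma opNorm_nonneg (A : Matrix (Fin d1) (Fin d2) ℝ) : 0 ≤ opNorm A := norm_nonneg _

private lemma Amul_norm_le (A : Matrix (Fin d1) (Fin d2) ℝ) (y : Vec d2) :
    ‖vmk (fun i => ∑ j, A i j * y j)‖ ≤ opNorm A * ‖y‖ := by
  rw [← Amul_eq]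
  simpa [opNorm] using (LinearMap.toContinuousLinearMap (Matrix.toEuclideanLin A)).le_opNorm y

private lemma ATmul_norm_le (A : Matrix (Fin d1) (Fin d2) ℝ) (x : Vec d1) :
    ‖vmk (fun j => ∑ i, A i j * x i)‖ ≤ opNorm A * ‖x‖ := by
  set w : Vec d2 := vmk (fun j => ∑ i, A i j * x i) with hwdef
  rcases eq_or_lt_of_le (norm_nonneg w) with h0 | hpos
  · rw [← h0]; exact mul_nonneg (opNorm_nonneg A) (norm_nonneg x)
  · have key : ‖w‖^2 = ⟪x, vmk (fun i => ∑ j, A i j * w j)⟫ := by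
      rw [vnorm_sq, rinner_eq]
      have lhs : ∑ j, (w j)^2 = ∑ j, ∑ i, x i * (A i j * w j) := by
        refine Finset.sum_congr rfl fun j _ => ?_
        rw [show w j = ∑ i, A i j * x i from rfl, sq, Finset.sum_mul]
        exact Finset.sum_congr rfl fun i _ => by ring
      rw [lhs, Finset.sum_comm]
      exact Finset.sum_congr rfl fun i _ => by rw [vmk_apply, Finset.mul_sum]
    have step : ‖w‖^2 ≤ ‖x‖ * (opNorm A * ‖w‖) := by
      rw [key]
      calc ⟪x, vmk (fun i => ∑ j, A i j * w j)⟫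
          ≤ ‖x‖ * ‖vmk (fun i => ∑ j, A i j * w j)‖ := real_inner_le_norm _ _
        _ ≤ ‖x‖ * (opNorm A * ‖w‖) :=
            mul_le_mul_of_nonneg_left (Amul_norm_le A w) (norm_nonneg x)
    nlinarith [hpos, step]
end vec

section flip
variable {d1 d2 : ℕ}

private lemma LF_nonneg (A : Matrix (Fin d1) (Fin d2) ℝ) : 0 ≤ LF A :=
  mul_nonneg (mul_nonneg (Real.sqrt_nonneg 6) (opNorm_nonneg A))
    (le_trans (Nat.cast_nonneg d1) (le_max_left _ _))

private lemma Fop_apply_inl (A : Matrix (Fin d1) (Fin d2) ℝ) (z : Joint d1 d2) (i : Fin d1) :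
    Fop A z (Sum.inl i) = (∑ j, A i j * normPart (yPart z) j) -
      payoff A (normPart (xPart z)) (normPart (yPart z)) := rfl

private lemma Fop_apply_inr (A : Matrix (Fin d1) (Fin d2) ℝ) (z : Joint d1 d2) (j : Fin d2) :
    Fop A z (Sum.inr j) = -(∑ i, A i j * normPart (xPart z) i) +
      payoff A (normPart (xPart z)) (normPart (yPart z)) := rfl

set_option maxHeartbeats 1000000 in
private lemma Fop_lip (hd1 : 1 ≤ d1) (hd2 : 1 ≤ d2) (A : Matrix (Fin d1) (Fin d2) ℝ)
    {z z' : Joint d1 d2} (hz : z ∈ ZgeSet d1 d2) (hz' : z' ∈ ZgeSet d1 d2) :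
    ‖Fop A z - Fop A z'‖ ≤ LF A * ‖z - z'‖ := by
  set xh : Vec d1 := normPart (xPart z) with hxh
  set yh : Vec d2 := normPart (yPart z) with hyh
  set xh' : Vec d1 := normPart (xPart z') with hxh'
  set yh' : Vec d2 := normPart (yPart z') with hyh'
  have hxhs : xh ∈ simplexSet d1 := normPart_mem hz.1
  have hyhs : yh ∈ simplexSet d2 := normPart_mem hz.2
  have hxhs' : xh' ∈ simplexSet d1 := normPart_mem hz'.1
  have hyhs' : yh' ∈ simplexSet d2 := normPart_mem hz'.2
  set Dx : Vec d1 := xh - xh' with hDx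
  set Dy : Vec d2 := yh - yh' with hDy
  set ADy : Vec d1 := vmk (fun i => ∑ j, A i j * Dy j) with hADy
  set ATDx : Vec d2 := vmk (fun j => ∑ i, A i j * Dx i) with hATDx
  set q : ℝ := ∑ i, xh i * ADy i with hq
  set r : ℝ := ∑ j, yh' j * ATDx j with hr
  set N : ℝ := opNorm A with hN
  have hNn : 0 ≤ N := opNorm_nonneg A
  -- payoff difference decomposition
  have hqe : q = payoff A xh yh - payoff A xh yh' := by
    rw [hq]
    have step : ∀ i, xh i * ADy i
        = (∑ j, xh i * A i j * yh j) - (∑ j, xh i * A i j * yh' j) := by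
      intro i
      rw [hADy, vmk_apply, Finset.mul_sum, ← Finset.sum_sub_distrib]
      refine Finset.sum_congr rfl fun j _ => ?_
      rw [show Dy j = yh j - yh' j from rfl]; ring
    rw [Finset.sum_congr rfl fun i _ => step i, Finset.sum_sub_distrib]
    simp only [payoff]
  have hre : r = payoff A xh yh' - payoff A xh' yh' := by
    rw [hr]
    have step : ∀ j, yh' j * ATDx j
        = (∑ i, xh i * A i j * yh' j) - (∑ i, xh' i * A i j * yh' j) := by
      intro j
      rw [hATDx, vmk_apply, Finset.mul_sum, ← Finset.sum_sub_distrib]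
      refine Finset.sum_congr rfl fun i _ => ?_
      rw [show Dx i = xh i - xh' i from rfl]; ring
    rw [Finset.sum_congr rfl fun j _ => step j, Finset.sum_sub_distrib]
    simp only [payoff]
    rw [show (∑ j, ∑ i, xh i * A i j * yh' j) = ∑ i, ∑ j, xh i * A i j * yh' j
        from Finset.sum_comm,
      show (∑ j, ∑ i, xh' i * A i j * yh' j) = ∑ i, ∑ j, xh' i * A i j * yh' j
        from Finset.sum_comm]
  have hv : payoff A xh yh - payoff A xh' yh' = q + r := by rw [hqe, hre]; ring
  -- block formulas
  have hX : ∀ i, (Fop A z - Fop A z') (Sum.inl i) = (ADy i - q) - r := by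
    intro i
    have e0 : (Fop A z - Fop A z') (Sum.inl i) = Fop A z (Sum.inl i) - Fop A z' (Sum.inl i) := rfl
    rw [e0, Fop_apply_inl, Fop_apply_inl]
    have e1 : ADy i = (∑ j, A i j * yh j) - (∑ j, A i j * yh' j) := by
      rw [hADy, vmk_apply, ← Finset.sum_sub_distrib]
      refine Finset.sum_congr rfl fun j _ => ?_
      rw [show Dy j = yh j - yh' j from rfl]; ring
    rw [e1]
    linarith [hv]
  have hY : ∀ j, (Fop A z - Fop A z') (Sum.inr j) = -(ATDx j - r) + q := by
    intro j
    have e0 : (Fop A z - Fop A z') (Sum.inr j) = Fop A z (Sum.inr j) - Fop A z' (Sum.inr j) := rfl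
    rw [e0, Fop_apply_inr, Fop_apply_inr]
    have e1 : ATDx j = (∑ i, A i j * xh i) - (∑ i, A i j * xh' i) := by
      rw [hATDx, vmk_apply, ← Finset.sum_sub_distrib]
      refine Finset.sum_congr rfl fun i _ => ?_
      rw [show Dx i = xh i - xh' i from rfl]; ring
    rw [e1]
    linarith [hv]
  -- operator norm facts (need definitional ADy/ATDx)
  have hADyn : ‖ADy‖ ≤ N * ‖Dy‖ := by rw [hADy]; exact Amul_norm_le A Dy
  have hATDxn : ‖ATDx‖ ≤ N * ‖Dx‖ := by rw [hATDx]; exact ATmul_norm_le A Dx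
  have hBX : ∑ i, (ADy i - q)^2 ≤ (d1:ℝ) * ∑ i, (ADy i)^2 := by
    have := lemB_sum (fun i => xh i) (fun i => ADy i) hxhs.1 hxhs.2
    rw [← hq] at this
    exact this
  have hBY : ∑ j, (ATDx j - r)^2 ≤ (d2:ℝ) * ∑ j, (ATDx j)^2 := by
    have := lemB_sum (fun j => yh' j) (fun j => ATDx j) hyhs'.1 hyhs'.2
    rw [← hr] at this
    exact this
  have hqi : q = ⟪xh, ADy⟫ := by rw [hq, rinner_eq]
  have hri : r = ⟪yh', ATDx⟫ := by rw [hr, rinner_eq]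
  have hDxsq : ‖Dx‖^2 ≤ (d1:ℝ) * ‖xPart (z - z')‖^2 := by
    rw [hDx, hxh, hxh', show xPart (z - z') = xPart z - xPart z' from rfl]
    exact gLip hz.1 hz'.1
  have hDysq : ‖Dy‖^2 ≤ (d2:ℝ) * ‖yPart (z - z')‖^2 := by
    rw [hDy, hyh, hyh', show yPart (z - z') = yPart z - yPart z' from rfl]
    exact gLip hz.2 hz'.2
  -- block splittings (definitional)
  have splitX : xPart (Fop A z - Fop A z')
      = vmk (fun i => ADy i - q) - vmk (fun _ => r) := by
    ext i
    show (Fop A z - Fop A z') (Sum.inl i) = (ADy i - q) - r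
    exact hX i
  have splitY : yPart (Fop A z - Fop A z')
      = -(vmk (fun j => ATDx j - r)) + vmk (fun _ => q) := by
    ext j
    show (Fop A z - Fop A z') (Sum.inr j) = -(ATDx j - r) + q
    exact hY j
  clear_value xh yh xh' yh' Dx Dy ADy ATDx q r N
  clear hq hr hqe hre hv hX hY hDx hDy hADy hATDx hxh hyh hxh' hyh'
  -- now everything is opaque
  have hqabs : |q| ≤ N * ‖Dy‖ := by
    rw [hqi]
    calc |⟪xh, ADy⟫| ≤ ‖xh‖ * ‖ADy‖ := abs_real_inner_le_norm _ _
      _ ≤ 1 * (N * ‖Dy‖) := mul_le_mul (simplex_norm_le hxhs) hADyn (norm_nonneg _) one_pos.le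
      _ = N * ‖Dy‖ := one_mul _
  have hrabs : |r| ≤ N * ‖Dx‖ := by
    rw [hri]
    calc |⟪yh', ATDx⟫| ≤ ‖yh'‖ * ‖ATDx‖ := abs_real_inner_le_norm _ _
      _ ≤ 1 * (N * ‖Dx‖) := mul_le_mul (simplex_norm_le hyhs') hATDxn (norm_nonneg _) one_pos.le
      _ = N * ‖Dx‖ := one_mul _
  have hBn : 0 ≤ N * ‖Dx‖ + N * ‖Dy‖ :=
    add_nonneg (mul_nonneg hNn (norm_nonneg _)) (mul_nonneg hNn (norm_nonneg _))
  have hXn : ‖xPart (Fop A z - Fop A z')‖ ≤ Real.sqrt d1 * (N * ‖Dx‖ + N * ‖Dy‖) := by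
    rw [splitX]
    calc ‖vmk (fun i => ADy i - q) - vmk (fun _ : Fin d1 => r)‖
        ≤ ‖vmk (fun i => ADy i - q)‖ + ‖vmk (fun _ : Fin d1 => r)‖ := norm_sub_le _ _
      _ ≤ Real.sqrt d1 * ‖ADy‖ + Real.sqrt d1 * |r| := by
          refine add_le_add ?_ ?_
          · apply sqrt_mul_le (norm_nonneg _) (norm_nonneg _) (Nat.cast_nonneg d1)
            rw [vnorm_sq, vnorm_sq]
            simpa using hBX
          · rw [const_norm]
      _ ≤ Real.sqrt d1 * (N * ‖Dx‖ + N * ‖Dy‖) := by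
          rw [← mul_add]
          refine mul_le_mul_of_nonneg_left ?_ (Real.sqrt_nonneg _)
          linarith [hADyn, hrabs]
  have hYn : ‖yPart (Fop A z - Fop A z')‖ ≤ Real.sqrt d2 * (N * ‖Dx‖ + N * ‖Dy‖) := by
    rw [splitY]
    calc ‖-(vmk (fun j => ATDx j - r)) + vmk (fun _ : Fin d2 => q)‖
        ≤ ‖-(vmk (fun j => ATDx j - r))‖ + ‖vmk (fun _ : Fin d2 => q)‖ := norm_add_le _ _
      _ = ‖vmk (fun j => ATDx j - r)‖ + ‖vmk (fun _ : Fin d2 => q)‖ := by rw [norm_neg]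
      _ ≤ Real.sqrt d2 * ‖ATDx‖ + Real.sqrt d2 * |q| := by
          refine add_le_add ?_ ?_
          · apply sqrt_mul_le (norm_nonneg _) (norm_nonneg _) (Nat.cast_nonneg d2)
            rw [vnorm_sq, vnorm_sq]
            simpa using hBY
          · rw [const_norm]
      _ ≤ Real.sqrt d2 * (N * ‖Dx‖ + N * ‖Dy‖) := by
          rw [← mul_add]
          refine mul_le_mul_of_nonneg_left ?_ (Real.sqrt_nonneg _)
          linarith [hATDxn, hqabs]
  -- combine
  have hm1 : (1:ℝ) ≤ max (d1:ℝ) (d2:ℝ) :=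
    le_trans (by exact_mod_cast hd1) (le_max_left _ _)
  have hd1m : (d1:ℝ) ≤ max (d1:ℝ) (d2:ℝ) := le_max_left _ _
  have hd2m : (d2:ℝ) ≤ max (d1:ℝ) (d2:ℝ) := le_max_right _ _
  have hzsq : ‖z - z'‖^2 = ‖xPart (z - z')‖^2 + ‖yPart (z - z')‖^2 := joint_norm_sq _
  have hFsq : ‖Fop A z - Fop A z'‖^2 = ‖xPart (Fop A z - Fop A z')‖^2
      + ‖yPart (Fop A z - Fop A z')‖^2 := joint_norm_sq _
  have hXsq : ‖xPart (Fop A z - Fop A z')‖^2 ≤ (d1:ℝ) * (N * ‖Dx‖ + N * ‖Dy‖)^2 := by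
    have h2 := pow_le_pow_left₀ (norm_nonneg _) hXn 2
    rwa [mul_pow, Real.sq_sqrt (Nat.cast_nonneg d1)] at h2
  have hYsq : ‖yPart (Fop A z - Fop A z')‖^2 ≤ (d2:ℝ) * (N * ‖Dx‖ + N * ‖Dy‖)^2 := by
    have h2 := pow_le_pow_left₀ (norm_nonneg _) hYn 2
    rwa [mul_pow, Real.sq_sqrt (Nat.cast_nonneg d2)] at h2
  have hBsq : (N * ‖Dx‖ + N * ‖Dy‖)^2 ≤ 2 * N^2 * (‖Dx‖^2 + ‖Dy‖^2) := by
    nlinarith [sq_nonneg (N * ‖Dx‖ - N * ‖Dy‖)]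
  have hDsum : ‖Dx‖^2 + ‖Dy‖^2 ≤ (max (d1:ℝ) (d2:ℝ)) * ‖z - z'‖^2 := by
    rw [hzsq]
    have h1 : ‖Dx‖^2 ≤ (max (d1:ℝ) (d2:ℝ)) * ‖xPart (z - z')‖^2 :=
      le_trans hDxsq (mul_le_mul_of_nonneg_right hd1m (sq_nonneg _))
    have h2 : ‖Dy‖^2 ≤ (max (d1:ℝ) (d2:ℝ)) * ‖yPart (z - z')‖^2 :=
      le_trans hDysq (mul_le_mul_of_nonneg_right hd2m (sq_nonneg _))
    linarith [h1, h2]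
  have hFinsq : ‖Fop A z - Fop A z'‖^2
      ≤ 6 * N^2 * (max (d1:ℝ) (d2:ℝ))^2 * ‖z - z'‖^2 := by
    have hNsq : (0:ℝ) ≤ 2 * N^2 := by positivity
    have step1 : ‖Fop A z - Fop A z'‖^2
        ≤ ((d1:ℝ) + (d2:ℝ)) * (N * ‖Dx‖ + N * ‖Dy‖)^2 := by
      rw [hFsq]; linarith [hXsq, hYsq]
    have hB2 : (N * ‖Dx‖ + N * ‖Dy‖)^2 ≤ 2 * N^2 * ((max (d1:ℝ) (d2:ℝ)) * ‖z - z'‖^2) :=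
      le_trans hBsq (mul_le_mul_of_nonneg_left hDsum hNsq)
    have hdm : (d1:ℝ) + (d2:ℝ) ≤ 2 * (max (d1:ℝ) (d2:ℝ)) := by linarith
    calc ‖Fop A z - Fop A z'‖^2
        ≤ ((d1:ℝ) + (d2:ℝ)) * (N * ‖Dx‖ + N * ‖Dy‖)^2 := step1
      _ ≤ (2 * (max (d1:ℝ) (d2:ℝ))) * (N * ‖Dx‖ + N * ‖Dy‖)^2 :=
          mul_le_mul_of_nonneg_right hdm (sq_nonneg _)
      _ ≤ (2 * (max (d1:ℝ) (d2:ℝ))) * (2 * N^2 * ((max (d1:ℝ) (d2:ℝ)) * ‖z - z'‖^2)) :=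
          mul_le_mul_of_nonneg_left hB2 (by linarith)
      _ = 4 * N^2 * (max (d1:ℝ) (d2:ℝ))^2 * ‖z - z'‖^2 := by ring
      _ ≤ 6 * N^2 * (max (d1:ℝ) (d2:ℝ))^2 * ‖z - z'‖^2 := by
          have : (0:ℝ) ≤ N^2 * (max (d1:ℝ) (d2:ℝ))^2 * ‖z - z'‖^2 := by positivity
          nlinarith [this]
  have hLFsq : (LF A * ‖z - z'‖)^2 = 6 * N^2 * (max (d1:ℝ) (d2:ℝ))^2 * ‖z - z'‖^2 := by
    have h6 : Real.sqrt 6 ^ 2 = 6 := Real.sq_sqrt (by norm_num)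
    rw [LF, ← hN]
    linear_combination (N^2 * (max (d1:ℝ) (d2:ℝ))^2 * ‖z - z'‖^2) * h6
  have hfin := Real.sqrt_le_sqrt (le_of_le_of_eq hFinsq hLFsq.symm)
  rwa [Real.sqrt_sq (norm_nonneg _),
    Real.sqrt_sq (mul_nonneg (LF_nonneg A) (norm_nonneg _))] at hfin
end flip

section proj
variable {d d1 d2 : ℕ}

private lemma projOn_spec {E : Type*} [NormedAddCommGroup E] [InnerProductSpace ℝ E]
    [CompleteSpace E] {S : Set E} (hne : S.Nonempty) (hcl : IsClosed S)
    (hconv : Convex ℝ S) (u : E) :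
    projOn S u ∈ S ∧ ∀ y ∈ S, ⟪u - projOn S u, y - projOn S u⟫ ≤ 0 := by
  have hbdd : BddBelow (Set.range fun w : S => ‖u - w‖) := by
    refine ⟨0, ?_⟩
    rintro x ⟨w, rfl⟩
    exact norm_nonneg _
  obtain ⟨v, hv, hvmin⟩ := exists_norm_eq_iInf_of_complete_convex hne hcl.isComplete hconv u
  haveI : Nonempty S := ⟨⟨v, hv⟩⟩
  have hex : ∃ p ∈ S, ∀ q ∈ S, ‖u - p‖ ≤ ‖u - q‖ := by
    refine ⟨v, hv, fun q hq => ?_⟩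
    rw [hvmin]
    exact ciInf_le hbdd ⟨q, hq⟩
  rw [projOn, dif_pos hex]
  obtain ⟨hpS, hpmin⟩ := hex.choose_spec
  refine ⟨hpS, ?_⟩
  have heq : ‖u - hex.choose‖ = ⨅ w : S, ‖u - w‖ :=
    le_antisymm (le_ciInf fun w => hpmin w w.2) (ciInf_le hbdd ⟨hex.choose, hpS⟩)
  exact (norm_eq_iInf_iff_real_inner_le_zero hconv hpS).mp heq

private lemma clipped_closed : IsClosed (clippedSet d) := by
  have : clippedSet d
      = (⋂ i, {x : Vec d | 0 ≤ x i}) ∩ {x : Vec d | 1 ≤ ∑ i, x i} := by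
    ext x; simp [clippedSet, Set.mem_iInter]
  rw [this]
  exact IsClosed.inter
    (isClosed_iInter fun i => isClosed_le continuous_const (by fun_prop))
    (isClosed_le continuous_const (by fun_prop))

private lemma Zge_closed : IsClosed (ZgeSet d1 d2) := by
  have : ZgeSet d1 d2 = (xPart ⁻¹' clippedSet d1) ∩ (yPart ⁻¹' clippedSet d2) := rfl
  rw [this]
  have hx : Continuous (xPart : Joint d1 d2 → Vec d1) := by
    refine Continuous.comp (g := WithLp.toLp 2) (PiLp.continuous_toLp ..) ?_
    apply continuous_pi
    intro i
    show Continuous fun z : Joint d1 d2 => z (Sum.inl i)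
    fun_prop
  have hy : Continuous (yPart : Joint d1 d2 → Vec d2) := by
    refine Continuous.comp (g := WithLp.toLp 2) (PiLp.continuous_toLp ..) ?_
    apply continuous_pi
    intro j
    show Continuous fun z : Joint d1 d2 => z (Sum.inr j)
    fun_prop
  exact IsClosed.inter (clipped_closed.preimage hx) (clipped_closed.preimage hy)

private lemma Zge_convex : Convex ℝ (ZgeSet d1 d2) := by
  intro a ha b hb s t hs ht hst
  constructor
  · constructor
    · intro i
      have := ha.1.1 i
      have := hb.1.1 i
      show 0 ≤ s * a (Sum.inl i) + t * b (Sum.inl i)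
      positivity
    · have e : ∑ i, xPart (s • a + t • b) i = s * (∑ i, xPart a i) + t * (∑ i, xPart b i) := by
        rw [Finset.mul_sum, Finset.mul_sum, ← Finset.sum_add_distrib]
        exact Finset.sum_congr rfl fun i _ => rfl
      rw [e]
      have h1 := ha.1.2
      have h2 := hb.1.2
      nlinarith
  · constructor
    · intro j
      have := ha.2.1 j
      have := hb.2.1 j
      show 0 ≤ s * a (Sum.inr j) + t * b (Sum.inr j)
      positivity
    · have e : ∑ j, yPart (s • a + t • b) j = s * (∑ j, yPart a j) + t * (∑ j, yPart b j) := by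
        rw [Finset.mul_sum, Finset.mul_sum, ← Finset.sum_add_distrib]
        exact Finset.sum_congr rfl fun j _ => rfl
      rw [e]
      have h1 := ha.2.2
      have h2 := hb.2.2
      nlinarith

private lemma Zset_subset : Zset d1 d2 ⊆ ZgeSet d1 d2 := by
  rintro z ⟨⟨hx0, hx1⟩, ⟨hy0, hy1⟩⟩
  exact ⟨⟨hx0, hx1.ge⟩, ⟨hy0, hy1.ge⟩⟩

private lemma simplex_closed : IsClosed (simplexSet d) := by
  have : simplexSet d
      = (⋂ i, {x : Vec d | 0 ≤ x i}) ∩ {x : Vec d | ∑ i, x i = 1} := by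
    ext x; simp [simplexSet, Set.mem_iInter]
  rw [this]
  exact IsClosed.inter
    (isClosed_iInter fun i => isClosed_le continuous_const (by fun_prop))
    (isClosed_eq (by fun_prop) continuous_const)

private lemma simplex_compact : IsCompact (simplexSet d) := by
  apply Metric.isCompact_of_isClosed_isBounded simplex_closed
  refine (Metric.isBounded_closedBall (x := (0:Vec d)) (r := 1)).subset fun x hx => ?_
  simpa [Metric.mem_closedBall] using simplex_norm_le hx

private lemma simplex_nonempty (hd : 1 ≤ d) : (simplexSet d).Nonempty := by
  have hd0 : (d:ℝ) ≠ 0 := Nat.cast_ne_zero.2 (by omega)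
  refine ⟨vmk (fun _ => (d:ℝ)⁻¹), fun i => by
    rw [vmk_apply]; exact inv_nonneg.2 (Nat.cast_nonneg d), ?_⟩
  simp [Finset.sum_const, Finset.card_univ, nsmul_eq_mul, hd0]

private lemma payoff_continuous_right (A : Matrix (Fin d1) (Fin d2) ℝ) (x : Vec d1) :
    Continuous (fun y : Vec d2 => payoff A x y) := by
  show Continuous fun y : Vec d2 => ∑ i, ∑ j, x i * A i j * y j
  fun_prop

private lemma payoff_continuous_left (A : Matrix (Fin d1) (Fin d2) ℝ) (y : Vec d2) :
    Continuous (fun x : Vec d1 => payoff A x y) := by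
  show Continuous fun x : Vec d1 => ∑ i, ∑ j, x i * A i j * y j
  fun_prop

private lemma gap_attained (hd1 : 1 ≤ d1) (hd2 : 1 ≤ d2) (A : Matrix (Fin d1) (Fin d2) ℝ)
    (xh : Vec d1) (yh : Vec d2) :
    ∃ xs ∈ simplexSet d1, ∃ ys ∈ simplexSet d2,
      dualGap A xh yh = payoff A xh ys - payoff A xs yh := by
  obtain ⟨ys, hys, hmax⟩ := simplex_compact.exists_isMaxOn (simplex_nonempty hd2)
    (payoff_continuous_right A xh).continuousOn
  obtain ⟨xs, hxs, hmin⟩ := simplex_compact.exists_isMinOn (simplex_nonempty hd1)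
    (payoff_continuous_left A yh).continuousOn
  refine ⟨xs, hxs, ys, hys, ?_⟩
  rw [dualGap]
  congr 1
  · apply IsGreatest.csSup_eq
    exact ⟨⟨ys, hys, rfl⟩, by rintro a ⟨y, hy, rfl⟩; exact hmax hy⟩
  · apply IsLeast.csInf_eq
    exact ⟨⟨xs, hxs, rfl⟩, by rintro a ⟨x, hx, rfl⟩; exact hmin hx⟩
end proj

section finallayer
variable {d d1 d2 : ℕ}

private lemma lin2 (f g : Fin d → ℝ) (a b : ℝ) :
    ∑ i, (a * f i + b * g i) = a * (∑ i, f i) + b * (∑ i, g i) := by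
  simp [Finset.sum_add_distrib, ← Finset.mul_sum]

private lemma payoff_left (A : Matrix (Fin d1) (Fin d2) ℝ) (x : Vec d1) (y : Vec d2) :
    ∑ i, x i * (∑ j, A i j * y j) = payoff A x y := by
  simp only [payoff]
  refine Finset.sum_congr rfl fun i _ => ?_
  rw [Finset.mul_sum]
  exact Finset.sum_congr rfl fun j _ => by ring

private lemma payoff_right (A : Matrix (Fin d1) (Fin d2) ℝ) (x : Vec d1) (y : Vec d2) :
    ∑ j, y j * (∑ i, A i j * x i) = payoff A x y := by
  simp only [payoff]
  have e : ∀ j, y j * (∑ i, A i j * x i) = ∑ i, x i * A i j * y j := by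
    intro j
    rw [Finset.mul_sum]
    exact Finset.sum_congr rfl fun i _ => by ring
  rw [Finset.sum_congr rfl fun j _ => e j]
  exact Finset.sum_comm

private lemma F_inner_self (A : Matrix (Fin d1) (Fin d2) ℝ) {z : Joint d1 d2}
    (hz : z ∈ ZgeSet d1 d2) : ⟪Fop A z, z⟫ = 0 := by
  rw [joint_inner]
  have hxs := normPart_mem hz.1
  have hys := normPart_mem hz.2
  have ex : ∀ i, Fop A z (Sum.inl i) * z (Sum.inl i)
      = (∑ k, xPart z k) * (normPart (xPart z) i * (∑ j, A i j * normPart (yPart z) j))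
        + (-(payoff A (normPart (xPart z)) (normPart (yPart z)) * (∑ k, xPart z k)))
          * normPart (xPart z) i := by
    intro i
    rw [Fop_apply_inl, show z (Sum.inl i) = xPart z i from rfl, smul_normPart hz.1 i]
    ring
  have ey : ∀ j, Fop A z (Sum.inr j) * z (Sum.inr j)
      = (-(∑ k, yPart z k)) * (normPart (yPart z) j * (∑ i, A i j * normPart (xPart z) i))
        + (payoff A (normPart (xPart z)) (normPart (yPart z)) * (∑ k, yPart z k))
          * normPart (yPart z) j := by
    intro j
    rw [Fop_apply_inr, show z (Sum.inr j) = yPart z j from rfl, smul_normPart hz.2 j]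
    ring
  rw [Finset.sum_congr rfl fun i _ => ex i, Finset.sum_congr rfl fun j _ => ey j,
    lin2, lin2, payoff_left, payoff_right, hxs.2, hys.2]
  ring

private lemma F_inner_pt (A : Matrix (Fin d1) (Fin d2) ℝ) (z : Joint d1 d2)
    (x' : Vec d1) (y' : Vec d2) (hx'1 : ∑ i, x' i = 1) (hy'1 : ∑ j, y' j = 1) :
    ⟪Fop A z, joinPt x' y'⟫
      = payoff A x' (normPart (yPart z)) - payoff A (normPart (xPart z)) y' := by
  rw [joint_inner]
  have ex : ∀ i, Fop A z (Sum.inl i) * joinPt x' y' (Sum.inl i)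
      = 1 * (x' i * (∑ j, A i j * normPart (yPart z) j))
        + (-(payoff A (normPart (xPart z)) (normPart (yPart z)))) * x' i := by
    intro i
    rw [Fop_apply_inl, show joinPt x' y' (Sum.inl i) = x' i from rfl]
    ring
  have ey : ∀ j, Fop A z (Sum.inr j) * joinPt x' y' (Sum.inr j)
      = (-1) * (y' j * (∑ i, A i j * normPart (xPart z) i))
        + (payoff A (normPart (xPart z)) (normPart (yPart z))) * y' j := by
    intro j
    rw [Fop_apply_inr, show joinPt x' y' (Sum.inr j) = y' j from rfl]
    ring
  rw [Finset.sum_congr rfl fun i _ => ex i, Finset.sum_congr rfl fun j _ => ey j,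
    lin2, lin2, payoff_left, payoff_right, hx'1, hy'1]
  ring

private lemma Zset_dist {z z' : Joint d1 d2} (hz : z ∈ Zset d1 d2) (hz' : z' ∈ Zset d1 d2) :
    ‖z - z'‖ ≤ 2 := by
  have hblock : ∀ (k : ℕ) (a b : Vec k), a ∈ simplexSet k → b ∈ simplexSet k →
      ‖a - b‖^2 ≤ 2 := by
    intro k a b ha hb
    have hinner : 0 ≤ ⟪a, b⟫ := by
      rw [rinner_eq]
      exact Finset.sum_nonneg fun i _ => mul_nonneg (ha.1 i) (hb.1 i)
    have := norm_sub_sq_real a b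
    have h1 := simplex_norm_sq_le ha
    have h2 := simplex_norm_sq_le hb
    nlinarith
  have hx := hblock d1 (xPart z) (xPart z') hz.1 hz'.1
  have hy := hblock d2 (yPart z) (yPart z') hz.2 hz'.2
  have hsq : ‖z - z'‖^2 ≤ 4 := by
    rw [joint_norm_sq,
      show xPart (z - z') = xPart z - xPart z' from rfl,
      show yPart (z - z') = yPart z - yPart z' from rfl]
    linarith
  nlinarith [norm_nonneg (z - z')]
end finallayer

/-- A projection step bounds the duality gap of the normalized projected
point. -/
theorem small_distance_implies_approximate_NE {d1 d2 : ℕ} (hd1 : 1 ≤ d1) (hd2 : 1 ≤ d2)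
    (A : Matrix (Fin d1) (Fin d2) ℝ) (η : ℝ) (hη : 0 < η)
    (z : Joint d1 d2) (hz : z ∈ Zset d1 d2)
    (z1 z2 z3 : Joint d1 d2) (hz1 : z1 ∈ ZgeSet d1 d2) (hz2 : z2 ∈ ZgeSet d1 d2)
    (hz3 : z3 ∈ ZgeSet d1 d2)
    (hproj : z3 = projOn (ZgeSet d1 d2) (z1 - η • Fop A z2)) :
    dualGap A (normPart (xPart z3)) (normPart (yPart z3)) ≤
      (‖z1 - z3‖ + η * LF A * ‖z3 - z2‖) * (‖z3 - z‖ + 2) / η := by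
  obtain ⟨hpm, hVI⟩ := projOn_spec (⟨z1, hz1⟩ : (ZgeSet d1 d2).Nonempty)
    Zge_closed Zge_convex (z1 - η • Fop A z2)
  rw [← hproj] at hVI
  obtain ⟨xs, hxs, ys, hys, hgap⟩ :=
    gap_attained hd1 hd2 A (normPart (xPart z3)) (normPart (yPart z3))
  have hz'Z : joinPt xs ys ∈ Zset d1 d2 := ⟨hxs, hys⟩
  have hz'ge : joinPt xs ys ∈ ZgeSet d1 d2 := Zset_subset hz'Z
  have h1 : ⟪z1 - η • Fop A z2 - z3, joinPt xs ys - z3⟫ ≤ 0 := hVI _ hz'ge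
  -- rearrange the variational inequality
  have h2 : η * ⟪Fop A z2, z3 - joinPt xs ys⟫ ≤ ⟪z1 - z3, z3 - joinPt xs ys⟫ := by
    have e1 : ⟪z1 - η • Fop A z2 - z3, joinPt xs ys - z3⟫
        = ⟪z1 - z3, joinPt xs ys - z3⟫ - η * ⟪Fop A z2, joinPt xs ys - z3⟫ := by
      rw [sub_right_comm, inner_sub_left, real_inner_smul_left]
    have e2 : ⟪z1 - z3, joinPt xs ys - z3⟫ = -⟪z1 - z3, z3 - joinPt xs ys⟫ := by
      rw [show joinPt xs ys - z3 = -(z3 - joinPt xs ys) from (neg_sub _ _).symm,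
        inner_neg_right]
    have e3 : ⟪Fop A z2, joinPt xs ys - z3⟫ = -⟪Fop A z2, z3 - joinPt xs ys⟫ := by
      rw [show joinPt xs ys - z3 = -(z3 - joinPt xs ys) from (neg_sub _ _).symm,
        inner_neg_right]
    rw [e1, e2, e3] at h1
    linarith
  -- value of the regret operator pairing
  have hval : ⟪Fop A z3, z3 - joinPt xs ys⟫
      = payoff A (normPart (xPart z3)) ys - payoff A xs (normPart (yPart z3)) := by
    rw [inner_sub_right, F_inner_self A hz3, F_inner_pt A z3 xs ys hxs.2 hys.2]
    ring
  have hsplit : ⟪Fop A z3, z3 - joinPt xs ys⟫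
      = ⟪Fop A z2, z3 - joinPt xs ys⟫ + ⟪Fop A z3 - Fop A z2, z3 - joinPt xs ys⟫ := by
    rw [inner_sub_left]; ring
  have hcs1 : ⟪z1 - z3, z3 - joinPt xs ys⟫ ≤ ‖z1 - z3‖ * ‖z3 - joinPt xs ys‖ :=
    real_inner_le_norm _ _
  have hcs2 : ⟪Fop A z3 - Fop A z2, z3 - joinPt xs ys⟫
      ≤ ‖Fop A z3 - Fop A z2‖ * ‖z3 - joinPt xs ys‖ := real_inner_le_norm _ _
  have hlip : ‖Fop A z3 - Fop A z2‖ ≤ LF A * ‖z3 - z2‖ := Fop_lip hd1 hd2 A hz3 hz2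
  have hdist : ‖z3 - joinPt xs ys‖ ≤ ‖z3 - z‖ + 2 := by
    calc ‖z3 - joinPt xs ys‖ = dist z3 (joinPt xs ys) := (dist_eq_norm _ _).symm
      _ ≤ dist z3 z + dist z (joinPt xs ys) := dist_triangle _ _ _
      _ = ‖z3 - z‖ + ‖z - joinPt xs ys‖ := by rw [dist_eq_norm, dist_eq_norm]
      _ ≤ ‖z3 - z‖ + 2 := by linarith [Zset_dist hz hz'Z]
  have hC : 0 ≤ ‖z1 - z3‖ + η * LF A * ‖z3 - z2‖ :=
    add_nonneg (norm_nonneg _)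
      (mul_nonneg (mul_nonneg hη.le (LF_nonneg A)) (norm_nonneg _))
  -- main chain
  have s1 : η * ⟪Fop A z3, z3 - joinPt xs ys⟫
      = η * ⟪Fop A z2, z3 - joinPt xs ys⟫
        + η * ⟪Fop A z3 - Fop A z2, z3 - joinPt xs ys⟫ := by
    rw [hsplit]; ring
  have s2 : η * ⟪Fop A z2, z3 - joinPt xs ys⟫ ≤ ‖z1 - z3‖ * ‖z3 - joinPt xs ys‖ :=
    le_trans h2 hcs1
  have s3 : η * ⟪Fop A z3 - Fop A z2, z3 - joinPt xs ys⟫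
      ≤ η * (‖Fop A z3 - Fop A z2‖ * ‖z3 - joinPt xs ys‖) :=
    mul_le_mul_of_nonneg_left hcs2 hη.le
  have s4 : η * (‖Fop A z3 - Fop A z2‖ * ‖z3 - joinPt xs ys‖)
      ≤ η * ((LF A * ‖z3 - z2‖) * ‖z3 - joinPt xs ys‖) :=
    mul_le_mul_of_nonneg_left (mul_le_mul_of_nonneg_right hlip (norm_nonneg _)) hη.le
  have s5 : η * ⟪Fop A z3, z3 - joinPt xs ys⟫
      ≤ (‖z1 - z3‖ + η * LF A * ‖z3 - z2‖) * ‖z3 - joinPt xs ys‖ := by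
    have e : (‖z1 - z3‖ + η * LF A * ‖z3 - z2‖) * ‖z3 - joinPt xs ys‖
        = ‖z1 - z3‖ * ‖z3 - joinPt xs ys‖
          + η * ((LF A * ‖z3 - z2‖) * ‖z3 - joinPt xs ys‖) := by ring
    rw [e]
    linarith
  have s6 : (‖z1 - z3‖ + η * LF A * ‖z3 - z2‖) * ‖z3 - joinPt xs ys‖
      ≤ (‖z1 - z3‖ + η * LF A * ‖z3 - z2‖) * (‖z3 - z‖ + 2) :=
    mul_le_mul_of_nonneg_left hdist hC
  rw [hgap, le_div_iff₀ hη]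
  calc (payoff A (normPart (xPart z3)) ys - payoff A xs (normPart (yPart z3))) * η
      = η * ⟪Fop A z3, z3 - joinPt xs ys⟫ := by rw [hval]; ring
    _ ≤ (‖z1 - z3‖ + η * LF A * ‖z3 - z2‖) * (‖z3 - z‖ + 2) := le_trans s5 s6

end
end
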